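/- arXiv:1802.09230 — 7 statements merged into one kernel-verified Lean document; each statement's English description precedes it below -/
import Mathlib

section
/- Let d ≥ 1 and let Z be a nonempty set of vertices of the d-cube graph Q_d. Then the number of coordinates i ∈ {1,…,d} for which Z contains two vertices differing exactly in coordinate i (equivalently, the number of pairs of opposite facets of the d-cube associated with Z) is at most |Z| − 1. -/
/-!
Read the cube over a field, e.g. `Bool ≅ 𝔽₂`. If `x, y ∈ Z` differ exactly in coordinate `i`,
then `x - y` is a nonzero multiple of the unit vector `eᵢ`, so `eᵢ` lies in the vector span of `Z`.
The unit vectors are linearly independent, while the vector span of `|Z|` points has dimension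
at most `|Z| - 1`.
-/

/-- The `d`-cube graph: vertices are functions `Fin d → Bool`, two vertices
adjacent iff they differ in exactly one coordinate. -/
def cubeGraph (d : ℕ) : SimpleGraph (Fin d → Bool) where
  Adj x y := ∃ i, x i ≠ y i ∧ ∀ j, j ≠ i → x j = y j
  symm := by
    constructor
    rintro x y ⟨i, hi, hj⟩
    exact ⟨i, fun h => hi h.symm, fun j hji => (hj j hji).symm⟩
  loopless := by
    constructor
    rintro x ⟨i, hi, -⟩
    exact hi rfl

open Function Module

def associatedDirections {ι α : Type*} (Z : Finset (ι → α)) : Set ι :=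
  {i | ∃ x ∈ Z, ∃ y ∈ Z, x i ≠ y i ∧ ∀ j, j ≠ i → x j = y j}

theorem associatedDirections_image_comp {ι α β : Type*} [DecidableEq (ι → β)] {f : α → β}
    (hf : Injective f) (Z : Finset (ι → α)) :
    associatedDirections (Z.image (f ∘ ·)) = associatedDirections Z := by
  ext i
  simp only [associatedDirections, Set.mem_ofPred_eq, Finset.exists_mem_image, comp_apply,
    hf.ne_iff, hf.eq_iff]

theorem sub_eq_single_of_forall_ne {ι G : Type*} [DecidableEq ι] [AddGroup G] {x y : ι → G}
    {i : ι} (h : ∀ j, j ≠ i → x j = y j) : x - y = Pi.single i (x i - y i) := by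
  ext j
  by_cases hj : j = i
  · subst hj
    simp
  · simp [hj, h j hj]

theorem finrank_vectorSpan_le_card_sub_one {K V P : Type*} [DivisionRing K] [AddCommGroup V]
    [Module K V] [AddTorsor V P] (Z : Finset P) :
    finrank K (vectorSpan K (Z : Set P)) ≤ Z.card - 1 := by
  classical
  rcases Z.eq_empty_or_nonempty with rfl | hZ
  · rw [Finset.coe_empty, vectorSpan_empty, finrank_bot]
    exact Nat.zero_le _
  · have h := finrank_vectorSpan_image_finset_le K id Z (Nat.succ_pred_eq_of_pos hZ.card_pos).symm
    rwa [Finset.image_id] at h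

section DivisionRing

variable {K ι : Type*} [DivisionRing K]

theorem single_one_mem_vectorSpan [DecidableEq ι] {Z : Finset (ι → K)} {i : ι}
    (hi : i ∈ associatedDirections Z) : Pi.single i 1 ∈ vectorSpan K (Z : Set (ι → K)) := by
  obtain ⟨x, hx, y, hy, hxy, hrest⟩ := hi
  have hsub : x - y = (x i - y i) • Pi.single i (1 : K) := by
    rw [sub_eq_single_of_forall_ne hrest, ← Pi.single_smul, smul_eq_mul, mul_one]
  rw [← Submodule.smul_mem_iff _ (sub_ne_zero.mpr hxy), ← hsub]
  exact vsub_mem_vectorSpan K hx hy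

theorem ncard_associatedDirections_le_finrank (Z : Finset (ι → K)) :
    (associatedDirections Z).ncard ≤ finrank K (vectorSpan K (Z : Set (ι → K))) := by
  classical
  have := finiteDimensional_vectorSpan_of_finite K Z.finite_toSet
  let e : associatedDirections Z → vectorSpan K (Z : Set (ι → K)) :=
    fun i => ⟨Pi.single i.1 1, single_one_mem_vectorSpan i.2⟩
  have he : LinearIndependent K e :=
    .of_comp (Submodule.subtype _)
      ((Pi.linearIndependent_single_one ι K).comp _ Subtype.val_injective)
  have := he.finite
  have := Fintype.ofFinite (associatedDirections Z)
  rw [Set.ncard_eq_toFinset_card', Set.toFinset_card]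
  exact he.fintype_card_le_finrank

theorem ncard_associatedDirections_le (Z : Finset (ι → K)) :
    (associatedDirections Z).ncard ≤ Z.card - 1 :=
  (ncard_associatedDirections_le_finrank Z).trans (finrank_vectorSpan_le_card_sub_one Z)

end DivisionRing

theorem cube_directions_associated_le_general (d : ℕ)
    (Z : Finset (Fin d → Bool)) :
    {i : Fin d | ∃ x ∈ Z, ∃ y ∈ Z, x i ≠ y i ∧ ∀ j, j ≠ i → x j = y j}.ncard
      ≤ Z.card - 1 := by
  let f : Bool → ZMod 2 := fun b => b.toNat
  have hf : Injective f := by decide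
  have h := ncard_associatedDirections_le (Z.image (f ∘ ·))
  rwa [associatedDirections_image_comp hf, Finset.card_image_of_injective _ hf.comp_left] at h

/-- For a nonempty set `Z` of vertices of the `d`-cube, the number of
coordinates (directions, i.e. pairs of opposite facets) `i` such that `Z`
contains two vertices differing exactly in coordinate `i` is at most
`|Z| - 1`. -/
theorem cube_directions_associated_le (d : ℕ) (hd : 1 ≤ d)
    (Z : Finset (Fin d → Bool)) (hZ : Z.Nonempty) :
    {i : Fin d | ∃ x ∈ Z, ∃ y ∈ Z, x i ≠ y i ∧ ∀ j, j ≠ i → x j = y j}.ncard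
      ≤ Z.card - 1 :=
  cube_directions_associated_le_general d Z
end

section
/- Let k ≥ 1, let G be a 2k-connected simple graph, and let G' be a subgraph of G that is k-linked. Then G is k-linked. -/
/-- A graph `G` is `m`-connected if it has at least `m + 1` vertices and
removing any set of fewer than `m` vertices leaves a connected induced
subgraph. -/
def IsNConnected {V : Type*} (G : SimpleGraph V) (m : ℕ) : Prop :=
  m + 1 ≤ Nat.card V ∧
    ∀ T : Finset V, T.card < m → (G.induce ((↑T : Set V)ᶜ)).Connected

/-- A graph `G` is `k`-linked if it has at least `2 * k` vertices and, for
every `2 * k` distinct vertices `s 0, t 0, …, s (k-1), t (k-1)`, there are `k`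
pairwise vertex-disjoint paths, the `i`-th joining `s i` to `t i`. -/
def IsKLinked {V : Type*} (G : SimpleGraph V) (k : ℕ) : Prop :=
  2 * k ≤ Nat.card V ∧
    ∀ s t : Fin k → V, Function.Injective (Sum.elim s t) →
      ∃ P : (i : Fin k) → G.Walk (s i) (t i),
        (∀ i, (P i).IsPath) ∧
        ∀ i j, i ≠ j → ∀ v, v ∈ (P i).support → v ∉ (P j).support

/-!
By Menger's theorem, `2k`-connectivity gives `2k` disjoint paths from the `2k` terminals to the
vertex set of `G'`, each meeting it only in its last vertex. Linking, inside `G'`, the last vertex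
of the path of `s i` to that of the path of `t i` and concatenating yields the `k` disjoint paths.

Menger's theorem (`n` disjoint `A`–`B` walks when every `A`–`B` separator has at least `n`
vertices) is proved by induction on the number of edges. If deleting an edge `xy` creates an
`A`–`B` separator `S` with fewer than `n` vertices, then `x` and `y` lie on opposite sides of `S`
in `G - xy`, say `x` on the side of `A`, and every `A`–`(S ∪ {x})` separator of `G - xy` separates
`A` from `B` in `G`; symmetrically for `(S ∪ {y})`–`B`. By induction there are `n` disjoint paths
from `A` to `S ∪ {x}` and from `S ∪ {y}` to `B` in `G - xy`; they stay on the two sides of `S`,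
so they can be glued through `S` and the edge `xy`.
-/

open Function

namespace SimpleGraph

variable {V : Type*} {G H : SimpleGraph V}

def Separates (G : SimpleGraph V) (A B : Set V) (S : Finset V) : Prop :=
  ∀ a ∈ A, ∀ b ∈ B, ∀ p : G.Walk a b, ∃ v ∈ p.support, v ∈ S

def reachAvoiding (G : SimpleGraph V) (S : Finset V) (A : Set V) : Set V :=
  {v | ∃ a ∈ A, ∃ p : G.Walk a v, ∀ w ∈ p.support, w ∉ S}

structure Linkage (G : SimpleGraph V) (ι : Type*) (A B : Set V) where
  src : ι → V
  dst : ι → V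
  walk : ∀ i, G.Walk (src i) (dst i)
  src_mem : ∀ i, src i ∈ A
  dst_mem : ∀ i, dst i ∈ B
  disjoint : Pairwise fun i j => ∀ v ∈ (walk i).support, v ∉ (walk j).support

structure Linkage.IsTrimmed {ι : Type*} {A B : Set V} (L : G.Linkage ι A B) : Prop where
  isPath : ∀ i, (L.walk i).IsPath
  eq_src : ∀ i, ∀ v ∈ (L.walk i).support, v ∈ A → v = L.src i
  eq_dst : ∀ i, ∀ v ∈ (L.walk i).support, v ∈ B → v = L.dst i

namespace Walk

theorem exists_prefix_first_mem (C : Set V) :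
    ∀ {u v : V} (p : G.Walk u v), (∃ w ∈ p.support, w ∈ C) →
      ∃ c ∈ C, ∃ q : G.Walk u c, q.support ⊆ p.support ∧ ∀ w ∈ q.support, w ∈ C → w = c
  | _, _, .nil, ⟨w, hw, hwC⟩ => by
    rw [support_nil, List.mem_singleton] at hw
    subst hw
    exact ⟨w, hwC, .nil, by simp, by simp⟩
  | u, _, .cons h p, hex => by
    by_cases hu : u ∈ C
    · exact ⟨u, hu, .nil, by simp, by simp⟩
    obtain ⟨c, hc, q, hqp, hqC⟩ :=
      exists_prefix_first_mem C p (by simpa [hu] using hex)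
    refine ⟨c, hc, .cons h q, by simpa using List.cons_subset_cons u hqp, ?_⟩
    simp only [support_cons, List.mem_cons, forall_eq_or_imp]
    exact ⟨fun h => absurd h hu, hqC⟩

theorem exists_isPath_first_last [DecidableEq V] {A B : Set V} {u v : V} (p : G.Walk u v)
    (hu : u ∈ A) (hv : v ∈ B) :
    ∃ a ∈ A, ∃ b ∈ B, ∃ q : G.Walk a b, q.IsPath ∧ q.support ⊆ p.support ∧
      (∀ w ∈ q.support, w ∈ A → w = a) ∧ ∀ w ∈ q.support, w ∈ B → w = b := by
  obtain ⟨b, hb, q₁, hq₁, hq₁B⟩ := p.exists_prefix_first_mem B ⟨v, p.end_mem_support, hv⟩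
  obtain ⟨a, ha, q₂, hq₂, hq₂A⟩ := q₁.reverse.exists_prefix_first_mem A ⟨u, by simp, hu⟩
  have hsub : q₂.reverse.bypass.support ⊆ q₂.support := fun w hw => by
    simpa using q₂.reverse.support_bypass_subset_support hw
  have hsub₁ : q₂.reverse.bypass.support ⊆ q₁.support := fun w hw => by
    simpa using hq₂ (hsub hw)
  exact ⟨a, ha, b, hb, q₂.reverse.bypass, q₂.reverse.bypass_isPath, List.Subset.trans hsub₁ hq₁,
    fun w hw => hq₂A w (hsub hw), fun w hw => hq₁B w (hsub₁ hw)⟩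

theorem IsPath.append_of_support_inter {u v w : V} {p : G.Walk u v} {q : G.Walk v w}
    (hp : p.IsPath) (hq : q.IsPath) (hpq : ∀ x ∈ p.support, x ∈ q.support → x = v) :
    (p.append q).IsPath := by
  have hq' := hq.support_nodup
  rw [← q.cons_tail_support, List.nodup_cons] at hq'
  rw [isPath_def, support_append, List.nodup_append]
  refine ⟨hp.support_nodup, hq'.2, fun x hx y hy hxy => hq'.1 ?_⟩
  subst hxy
  exact hpq x hx (List.mem_of_mem_tail hy) ▸ hy

theorem exists_walk_through_swap [DecidableEq V] {x y a b u u' : V} (hxy : G.Adj x y)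
    (hH : H ≤ G) (p : H.Walk a u) (q : H.Walk u' b) (hu' : u' = Equiv.swap x y u) (hu : u ≠ y) :
    ∃ W : G.Walk a b, ∀ v ∈ W.support, v ∈ p.support ∨ v ∈ q.support := by
  by_cases hux : u = x
  · have hadj : G.Adj u y := by rw [hux]; exact hxy
    refine ⟨(p.mapLe hH).append (.cons hadj ((q.mapLe hH).copy
      (by rw [hu', hux, Equiv.swap_apply_left]) rfl)), fun v hv => ?_⟩
    simp only [mem_support_append_iff, support_cons, List.mem_cons, support_copy,
      support_mapLe_eq_support] at hv
    rcases hv with hv | rfl | hv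
    · exact .inl hv
    · exact .inl p.end_mem_support
    · exact .inr hv
  · refine ⟨(p.mapLe hH).append ((q.mapLe hH).copy
      (hu'.trans (Equiv.swap_apply_of_ne_of_ne hux hu)) rfl), fun v hv => ?_⟩
    simpa only [mem_support_append_iff, support_copy, support_mapLe_eq_support] using hv

end Walk

theorem mem_reachAvoiding_of_isPath [DecidableEq V] {S : Finset V} {A : Set V} {a c w : V}
    {p : G.Walk a c} (hp : p.IsPath) (ha : a ∈ A) (hpS : ∀ w ∈ p.support, w ∈ S → w = c)
    (hw : w ∈ p.support) (hwc : w ≠ c) : w ∈ G.reachAvoiding S A :=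
  ⟨a, ha, p.takeUntil w hw, fun u hu huS => Walk.endpoint_notMem_support_takeUntil hp hw
    hwc.symm (hpS u (p.support_takeUntil_subset_support hw hu) huS ▸ hu)⟩

theorem notMem_of_mem_reachAvoiding {S : Finset V} {A : Set V} {v : V}
    (hv : v ∈ G.reachAvoiding S A) : v ∉ S := by
  obtain ⟨a, -, p, hp⟩ := hv
  exact hp v p.end_mem_support

namespace Separates

variable {A B : Set V} {S : Finset V}

theorem symm (hS : G.Separates A B S) : G.Separates B A S := fun b hb a ha p => by
  simpa using hS a ha b hb p.reverse

theorem disjoint_reachAvoiding (hS : G.Separates A B S) :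
    Disjoint (G.reachAvoiding S A) (G.reachAvoiding S B) := by
  rw [Set.disjoint_left]
  rintro v ⟨a, ha, p, hp⟩ ⟨b, hb, q, hq⟩
  obtain ⟨w, hw, hwS⟩ := hS a ha b hb (p.append q.reverse)
  rcases (Walk.mem_support_append_iff _ _).1 hw with h | h
  · exact hp w h hwS
  · exact hq w (by simpa using h) hwS

theorem insert_of_deleteEdges [DecidableEq V] {e : Sym2 V} {z : V}
    (hS : (G.deleteEdges {e}).Separates A B S) (hz : z ∈ e) : G.Separates A B (insert z S) := by
  intro a ha b hb p
  by_cases he : e ∈ p.edges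
  · exact ⟨z, p.mem_support_of_mem_edges he hz, Finset.mem_insert_self z S⟩
  obtain ⟨v, hv, hvS⟩ := hS a ha b hb (p.toDeleteEdge e he)
  exact ⟨v, by simpa using hv, Finset.mem_insert_of_mem hvS⟩

end Separates

namespace Linkage

variable {ι κ : Type*} {A B C D : Set V}

theorem src_injective (L : G.Linkage ι A B) : Injective L.src := fun i j hij => by
  by_contra hne
  exact L.disjoint hne _ (L.walk i).start_mem_support
    (by rw [hij]; exact (L.walk j).start_mem_support)

theorem dst_injective (L : G.Linkage ι A B) : Injective L.dst := fun i j hij => by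
  by_contra hne
  exact L.disjoint hne _ (L.walk i).end_mem_support
    (by rw [hij]; exact (L.walk j).end_mem_support)

def mapLe (L : G.Linkage ι A B) (h : G ≤ H) : H.Linkage ι A B where
  src := L.src
  dst := L.dst
  walk i := (L.walk i).mapLe h
  src_mem := L.src_mem
  dst_mem := L.dst_mem
  disjoint i j hij := by simpa only [Walk.support_mapLe_eq_support] using L.disjoint hij

def reindex (L : G.Linkage ι A B) (e : κ ↪ ι) : G.Linkage κ A B where
  src := L.src ∘ e
  dst := L.dst ∘ e
  walk k := L.walk (e k)
  src_mem k := L.src_mem (e k)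
  dst_mem k := L.dst_mem (e k)
  disjoint _ _ hkl := L.disjoint (e.injective.ne hkl)

def reverse (L : G.Linkage ι A B) : G.Linkage ι B A where
  src := L.dst
  dst := L.src
  walk i := (L.walk i).reverse
  src_mem := L.dst_mem
  dst_mem := L.src_mem
  disjoint i j hij := by
    simpa only [Walk.support_reverse, List.mem_reverse] using L.disjoint hij

def glue {H₁ H₂ : SimpleGraph V} (P : H₁.Linkage ι A C) (Q : H₂.Linkage ι D B)
    (W : ∀ i, G.Walk (P.src i) (Q.dst i))
    (hW : ∀ i, ∀ v ∈ (W i).support, v ∈ (P.walk i).support ∨ v ∈ (Q.walk i).support)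
    (hPQ : ∀ i j, ∀ v ∈ (P.walk i).support, v ∈ (Q.walk j).support → i = j) :
    G.Linkage ι A B where
  src := P.src
  dst := Q.dst
  walk := W
  src_mem := P.src_mem
  dst_mem := Q.dst_mem
  disjoint i j hij v hvi hvj := by
    rcases hW i v hvi with hi | hi <;> rcases hW j v hvj with hj | hj
    · exact P.disjoint hij v hi hj
    · exact hij (hPQ i j v hi hj)
    · exact hij (hPQ j i v hj hi).symm
    · exact Q.disjoint hij v hi hj

theorem IsTrimmed.reindex {L : G.Linkage ι A B} (hL : L.IsTrimmed) (e : κ ↪ ι) :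
    (L.reindex e).IsTrimmed :=
  ⟨fun k => hL.isPath (e k), fun k => hL.eq_src (e k), fun k => hL.eq_dst (e k)⟩

theorem IsTrimmed.reverse {L : G.Linkage ι A B} (hL : L.IsTrimmed) : L.reverse.IsTrimmed where
  isPath i := (hL.isPath i).reverse
  eq_src i v hv := hL.eq_dst i v (by simpa [Linkage.reverse] using hv)
  eq_dst i v hv := hL.eq_src i v (by simpa [Linkage.reverse] using hv)

theorem mem_support_reverse_walk {L : G.Linkage ι A B} {i : ι} {v : V} :
    v ∈ (L.reverse.walk i).support ↔ v ∈ (L.walk i).support := by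
  simp [Linkage.reverse]

theorem exists_isTrimmed [DecidableEq V] (L : G.Linkage ι A B) :
    ∃ L' : G.Linkage ι A B, L'.IsTrimmed := by
  choose a ha b hb P hP hPL hPa hPb using
    fun i => (L.walk i).exists_isPath_first_last (L.src_mem i) (L.dst_mem i)
  exact ⟨⟨a, b, P, ha, hb, fun i j hij v hi hj => L.disjoint hij v (hPL i hi) (hPL j hj)⟩,
    ⟨hP, hPa, hPb⟩⟩

theorem exists_equiv_src_eq [Fintype ι] (L : G.Linkage ι A B) (hA : A.Finite)
    (hcard : A.ncard ≤ Fintype.card ι) (g : ι → V) (hg : Injective g) (hgA : ∀ i, g i ∈ A) :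
    ∃ σ : ι ≃ ι, ∀ i, L.src (σ i) = g i := by
  have hrange : Set.range L.src = A :=
    Set.eq_of_subset_of_ncard_le (Set.range_subset_iff.2 L.src_mem)
      (by rwa [Set.ncard_range_of_injective L.src_injective, Nat.card_eq_fintype_card]) hA
  choose m hm using fun i => hrange ▸ hgA i
  have hm_inj : Injective m := fun i j hij => hg (by rw [← hm i, ← hm j, hij])
  exact ⟨Equiv.ofBijective m hm_inj.bijective_of_finite, hm⟩

theorem IsTrimmed.mem_reachAvoiding_or_mem [DecidableEq V] {S : Finset V} {x : V}
    {L : G.Linkage ι A ↑(insert x S)} (hL : L.IsTrimmed) (hx : x ∈ G.reachAvoiding S A) (i : ι)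
    {v : V} (hv : v ∈ (L.walk i).support) : v ∈ G.reachAvoiding S A ∨ v ∈ S := by
  by_cases hvd : v = L.dst i
  · have hmem := L.dst_mem i
    rw [← hvd, Finset.coe_insert, Set.mem_insert_iff, Finset.mem_coe] at hmem
    rcases hmem with rfl | h
    · exact Or.inl hx
    · exact Or.inr h
  · refine Or.inl (mem_reachAvoiding_of_isPath (hL.isPath i) (L.src_mem i) (fun w hw hwS => ?_)
      hv hvd)
    exact hL.eq_dst i w hw (by simp [hwS])

theorem IsTrimmed.mem_of_mem_walk_of_mem_walk [DecidableEq V] {S : Finset V} {x y : V}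
    {P : G.Linkage ι A ↑(insert x S)} {Q : G.Linkage κ ↑(insert y S) B} (hP : P.IsTrimmed)
    (hQ : Q.IsTrimmed) (hS : G.Separates A B S) (hx : x ∈ G.reachAvoiding S A)
    (hy : y ∈ G.reachAvoiding S B) {i : ι} {j : κ} {v : V} (hvP : v ∈ (P.walk i).support)
    (hvQ : v ∈ (Q.walk j).support) : v ∈ S := by
  rcases hP.mem_reachAvoiding_or_mem hx i hvP with hA | hvS
  · rcases hQ.reverse.mem_reachAvoiding_or_mem hy j (mem_support_reverse_walk.2 hvQ) with hB | hvS
    · exact absurd hB (Set.disjoint_left.1 hS.disjoint_reachAvoiding hA)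
    · exact absurd hvS (notMem_of_mem_reachAvoiding hA)
  · exact hvS

end Linkage

section Menger

variable {ι : Type*} [Fintype ι] {A B : Set V} {x y : V} {S : Finset V}

theorem exists_mem_reachAvoiding_deleteEdges (hxy : x ≠ y) {a b : V} (ha : a ∈ A)
    (p : G.Walk a b) (hpS : ∀ w ∈ p.support, w ∉ S) (hx : x ∈ p.support) :
    x ∈ (G.deleteEdges {s(x, y)}).reachAvoiding S A ∨
      y ∈ (G.deleteEdges {s(x, y)}).reachAvoiding S A := by
  obtain ⟨c, hc, q, hqp, hqc⟩ := p.exists_prefix_first_mem {x, y} ⟨x, hx, by simp⟩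
  have he : s(x, y) ∉ q.edges := fun he =>
    hxy ((hqc x (q.fst_mem_support_of_mem_edges he) (by simp)).trans
      (hqc y (q.snd_mem_support_of_mem_edges he) (by simp)).symm)
  have hc' : c ∈ (G.deleteEdges {s(x, y)}).reachAvoiding S A :=
    ⟨a, ha, q.toDeleteEdge _ he, fun w hw => hpS w (hqp (by simpa using hw))⟩
  rcases hc with rfl | rfl
  · exact Or.inl hc'
  · exact Or.inr hc'

variable [DecidableEq V]

theorem Separates.of_deleteEdges_insert (hS : (G.deleteEdges {s(x, y)}).Separates A B S)
    (hy : y ∈ (G.deleteEdges {s(x, y)}).reachAvoiding S B) {T : Finset V}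
    (hT : (G.deleteEdges {s(x, y)}).Separates A ↑(insert x S) T) : G.Separates A B T := by
  intro a ha b hb p
  obtain ⟨c, hc, q₀, hqp, hqc⟩ := p.exists_prefix_first_mem ↑(insert x S)
    (by simpa using hS.insert_of_deleteEdges (Sym2.mem_mk_left x y) a ha b hb p)
  set q := q₀.bypass
  have hq : q.IsPath := q₀.bypass_isPath
  have hqc' : ∀ w ∈ q.support, w ∈ (↑(insert x S) : Set V) → w = c :=
    fun w hw => hqc w (q₀.support_bypass_subset_support hw)
  by_cases he : s(x, y) ∈ q.edges
  · exfalso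
    have hxc : x = c := hqc' x (q.fst_mem_support_of_mem_edges he) (by simp)
    have hyq := q.snd_mem_support_of_mem_edges he
    have hyc : c ≠ y := hxc ▸ (q.adj_of_mem_edges he).ne
    have hcr := Walk.endpoint_notMem_support_takeUntil hq hyq hyc
    have hr : s(x, y) ∉ (q.takeUntil y hyq).edges := fun h =>
      hcr (hxc ▸ (q.takeUntil y hyq).fst_mem_support_of_mem_edges h)
    have hyA : y ∈ (G.deleteEdges {s(x, y)}).reachAvoiding S A := by
      refine ⟨a, ha, (q.takeUntil y hyq).toDeleteEdge _ hr, fun w hw hwS => hcr ?_⟩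
      rw [Walk.support_transfer] at hw
      exact hqc' w (q.support_takeUntil_subset_support hyq hw) (by simp [hwS]) ▸ hw
    exact Set.disjoint_left.1 hS.disjoint_reachAvoiding hyA hy
  · obtain ⟨v, hv, hvT⟩ := hT a ha c hc (q.toDeleteEdge _ he)
    rw [Walk.support_transfer] at hv
    exact ⟨v, hqp (q₀.support_bypass_subset_support hv), hvT⟩

theorem nonempty_linkage_of_mem_reachAvoiding (hxy : G.Adj x y)
    (hS : (G.deleteEdges {s(x, y)}).Separates A B S) (hxS : x ∉ S) (hyS : y ∉ S)
    (hcard : S.card < Fintype.card ι)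
    (hx : x ∈ (G.deleteEdges {s(x, y)}).reachAvoiding S A)
    (hy : y ∈ (G.deleteEdges {s(x, y)}).reachAvoiding S B)
    (hsep : ∀ T : Finset V, G.Separates A B T → Fintype.card ι ≤ T.card)
    (ih : ∀ A' B' : Set V, (∀ T : Finset V, (G.deleteEdges {s(x, y)}).Separates A' B' T →
      Fintype.card ι ≤ T.card) → Nonempty ((G.deleteEdges {s(x, y)}).Linkage ι A' B')) :
    Nonempty (G.Linkage ι A B) := by
  set G₁ := G.deleteEdges {s(x, y)}
  have hG₁ : G₁ ≤ G := G.deleteEdges_le _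
  obtain ⟨P, hP⟩ := (ih A ↑(insert x S) fun T hT =>
    hsep T (hS.of_deleteEdges_insert hy hT)).some.exists_isTrimmed
  obtain ⟨Q, hQ⟩ := (ih ↑(insert y S) B fun T hT => by
    have hsymm :=
      Separates.of_deleteEdges_insert (G := G) (A := B) (B := A) (x := y) (y := x) (S := S)
    rw [show G.deleteEdges {s(y, x)} = G₁ by rw [Sym2.eq_swap]] at hsymm
    exact hsep T (hsymm hS.symm hx hT.symm).symm).some.exists_isTrimmed
  -- the end `x` of a path of `P` is matched with the start `y` of a path of `Q`
  have hdst : ∀ i, P.dst i = x ∨ P.dst i ∈ S := fun i => by simpa using P.dst_mem i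
  have hdst_ne : ∀ i, P.dst i ≠ y := fun i h =>
    (hdst i).elim (fun hx' => hxy.ne (hx'.symm.trans h)) fun hS' => hyS (h ▸ hS')
  have hswap : ∀ v ∈ S, Equiv.swap x y v = v := fun v hv =>
    Equiv.swap_apply_of_ne_of_ne (ne_of_mem_of_not_mem hv hxS) (ne_of_mem_of_not_mem hv hyS)
  have hswap_mem : ∀ i, Equiv.swap x y (P.dst i) ∈ (↑(insert y S) : Set V) := fun i => by
    rcases hdst i with h | h
    · simp [h]
    · simp [hswap _ h, h]
  obtain ⟨σ, hσ⟩ := Q.exists_equiv_src_eq (insert y S).finite_toSet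
    (by rw [Set.ncard_coe_finset, Finset.card_insert_of_notMem hyS]; omega) _
    ((Equiv.injective _).comp P.dst_injective) hswap_mem
  set Q' := Q.reindex σ.toEmbedding
  choose W hW using fun i =>
    Walk.exists_walk_through_swap hxy hG₁ (P.walk i) (Q'.walk i) (hσ i) (hdst_ne i)
  refine ⟨P.glue Q' W hW fun i j v hvP hvQ => P.dst_injective ?_⟩
  have hvS := hP.mem_of_mem_walk_of_mem_walk hQ hS hx hy hvP hvQ
  have hvQ' : Equiv.swap x y (P.dst j) = v :=
    (hσ j).symm.trans (hQ.eq_src (σ j) v hvQ (by simp [hvS])).symm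
  rw [← hP.eq_dst i v hvP (by simp [hvS]), Equiv.swap_apply_eq_iff.1 hvQ', hswap v hvS]

theorem nonempty_linkage_of_adj (hxy : G.Adj x y)
    (hsep : ∀ T : Finset V, G.Separates A B T → Fintype.card ι ≤ T.card)
    (ih : ∀ A' B' : Set V, (∀ T : Finset V, (G.deleteEdges {s(x, y)}).Separates A' B' T →
      Fintype.card ι ≤ T.card) → Nonempty ((G.deleteEdges {s(x, y)}).Linkage ι A' B')) :
    Nonempty (G.Linkage ι A B) := by
  by_cases h₁ : ∀ T : Finset V, (G.deleteEdges {s(x, y)}).Separates A B T →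
      Fintype.card ι ≤ T.card
  · exact (ih A B h₁).map (·.mapLe (G.deleteEdges_le _))
  push Not at h₁
  obtain ⟨S, hS, hSι⟩ := h₁
  have hzS : ∀ z ∈ s(x, y), z ∉ S := fun z hz hzS => by
    have := hsep _ (hS.insert_of_deleteEdges hz)
    rw [Finset.insert_eq_of_mem hzS] at this
    omega
  obtain ⟨a, ha, b, hb, p, hpS⟩ : ∃ a ∈ A, ∃ b ∈ B, ∃ p : G.Walk a b, ∀ v ∈ p.support, v ∉ S := by
    by_contra! h
    exact absurd (hsep S h) (not_le.2 hSι)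
  have hxp : x ∈ p.support := by
    by_contra hxp
    have he : s(x, y) ∉ p.edges := fun he => hxp (p.fst_mem_support_of_mem_edges he)
    obtain ⟨v, hv, hvS⟩ := hS a ha b hb (p.toDeleteEdge _ he)
    exact hpS v (by simpa using hv) hvS
  have hdisj := Set.disjoint_left.1 hS.disjoint_reachAvoiding
  rcases exists_mem_reachAvoiding_deleteEdges hxy.ne ha p hpS hxp with hxA | hyA <;>
    rcases exists_mem_reachAvoiding_deleteEdges hxy.ne hb p.reverse (by simpa using hpS)
      (by simpa using hxp) with hxB | hyB
  · exact absurd hxB (hdisj hxA)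
  · exact nonempty_linkage_of_mem_reachAvoiding hxy hS (hzS x (Sym2.mem_mk_left x y))
      (hzS y (Sym2.mem_mk_right x y)) hSι hxA hyB hsep ih
  · rw [show G.deleteEdges {s(x, y)} = G.deleteEdges {s(y, x)} by rw [Sym2.eq_swap]]
      at hS hyA hxB ih
    exact nonempty_linkage_of_mem_reachAvoiding hxy.symm hS (hzS y (Sym2.mem_mk_right x y))
      (hzS x (Sym2.mem_mk_left x y)) hSι hyA hxB hsep ih
  · exact absurd hyB (hdisj hyA)

omit [DecidableEq V] in
theorem nonempty_linkage_bot [Finite V]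
    (h : ∀ S : Finset V, (⊥ : SimpleGraph V).Separates A B S → Fintype.card ι ≤ S.card) :
    Nonempty ((⊥ : SimpleGraph V).Linkage ι A B) := by
  have hAB : (A ∩ B).Finite := Set.toFinite _
  have hsep : (⊥ : SimpleGraph V).Separates A B hAB.toFinset := by
    rintro a ha b hb (_ | ⟨hadj, _⟩)
    · exact ⟨a, by simp, by simp [ha, hb]⟩
    · exact absurd hadj (by simp)
  obtain ⟨e⟩ : Nonempty (ι ↪ hAB.toFinset) :=
    Function.Embedding.nonempty_of_card_le (by rw [Fintype.card_coe]; exact h _ hsep)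
  have he : ∀ i, (e i : V) ∈ A ∧ (e i : V) ∈ B := fun i => hAB.mem_toFinset.1 (e i).2
  exact ⟨⟨fun i => e i, fun i => e i, fun _ => .nil, fun i => (he i).1, fun i => (he i).2,
    fun i j hij v hi hj => hij (e.injective (Subtype.ext (by simp_all)))⟩⟩

theorem menger [Finite V] (G : SimpleGraph V) (A B : Set V)
    (h : ∀ S : Finset V, G.Separates A B S → Fintype.card ι ≤ S.card) :
    Nonempty (G.Linkage ι A B) := by
  induction hn : G.edgeSet.ncard using Nat.strong_induction_on generalizing G A B with
  | _ n ih =>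
  by_cases hG : G = ⊥
  · subst hG
    exact nonempty_linkage_bot h
  obtain ⟨x, y, hxy⟩ : ∃ x y, G.Adj x y := by
    by_contra! hadj
    exact hG (eq_bot_iff_forall_not_adj.2 hadj)
  refine nonempty_linkage_of_adj hxy h fun A' B' h' => ih _ ?_ _ A' B' h' rfl
  rw [← hn, edgeSet_deleteEdges]
  exact Set.ncard_sdiff_singleton_lt_of_mem hxy

theorem exists_isTrimmed_linkage_src_eq [Finite V] (f : ι → V) (hf : Injective f) (B : Set V)
    (h : ∀ S : Finset V, G.Separates (Set.range f) B S → Fintype.card ι ≤ S.card) :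
    ∃ L : G.Linkage ι (Set.range f) B, L.IsTrimmed ∧ ∀ i, L.src i = f i := by
  obtain ⟨L, hL⟩ := (menger G _ B h).some.exists_isTrimmed
  obtain ⟨σ, hσ⟩ := L.exists_equiv_src_eq (Set.toFinite _)
    (by rw [Set.ncard_range_of_injective hf, Nat.card_eq_fintype_card]) f hf Set.mem_range_self
  exact ⟨L.reindex σ.toEmbedding, hL.reindex _, hσ⟩

end Menger

theorem Linkage.IsTrimmed.exists_paths_joining {κ : Type*} {A C : Set V}
    {R : G.Linkage (κ ⊕ κ) A C} (hR : R.IsTrimmed) {s t : κ → V}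
    (hsrc : ∀ i, R.src i = Sum.elim s t i) (Q : ∀ i, G.Walk (R.dst (.inl i)) (R.dst (.inr i)))
    (hQ : ∀ i, (Q i).IsPath) (hQdisj : ∀ i j, i ≠ j → ∀ v ∈ (Q i).support, v ∉ (Q j).support)
    (hQC : ∀ i, ∀ v ∈ (Q i).support, v ∈ C) :
    ∃ P : ∀ i, G.Walk (s i) (t i), (∀ i, (P i).IsPath) ∧
      ∀ i j, i ≠ j → ∀ v ∈ (P i).support, v ∉ (P j).support := by
  have hRQ : ∀ c j, ∀ v ∈ (R.walk c).support, v ∈ (Q j).support → v = R.dst c :=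
    fun c j v hv hvQ => hR.eq_dst c v hv (hQC j v hvQ)
  have hQ_eq : ∀ i j, ∀ v ∈ (Q i).support, v ∈ (Q j).support → i = j := fun i j v hi hj => by
    by_contra hij
    exact hQdisj i j hij v hi hj
  let M : G.Linkage κ C C :=
    ⟨_, _, Q, fun _ => R.dst_mem _, fun _ => R.dst_mem _, fun i j => hQdisj i j⟩
  let MR := M.glue (R.reindex .inr).reverse (fun i => (Q i).append (R.walk (.inr i)).reverse)
    (fun _ _ => (Walk.mem_support_append_iff _ _).1) fun i j v hvQ hvR => by
      have hvR' : v ∈ (R.walk (.inr j)).support := Linkage.mem_support_reverse_walk.1 hvR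
      refine hQ_eq i j v hvQ ?_
      rw [hRQ _ i v hvR' hvQ]
      exact (Q j).end_mem_support
  let L := (R.reindex .inl).glue MR (fun i => (R.walk (.inl i)).append (MR.walk i))
    (fun _ _ => (Walk.mem_support_append_iff _ _).1) fun i j v hvR hvMR => by
      rcases (Walk.mem_support_append_iff (Q j) (R.walk (.inr j)).reverse).1 hvMR with hvQ | hvR'
      · refine hQ_eq i j v ?_ hvQ
        rw [hRQ _ j v hvR hvQ]
        exact (Q i).start_mem_support
      · rw [Walk.support_reverse, List.mem_reverse] at hvR'
        exact (R.disjoint Sum.inl_ne_inr v hvR hvR').elim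
  have hs : ∀ i, L.src i = s i := fun i => hsrc (.inl i)
  have ht : ∀ i, L.dst i = t i := fun i => hsrc (.inr i)
  refine ⟨fun i => (L.walk i).copy (hs i) (ht i), fun i => (Walk.isPath_copy _ _ _).2 ?_,
    fun i j hij v => ?_⟩
  · refine (hR.isPath _).append_of_support_inter ((hQ i).append_of_support_inter
      (q := (R.walk (.inr i)).reverse) (hR.isPath _).reverse fun v hvQ hvR =>
        hRQ _ i v (by simpa using hvR) hvQ) fun v hvR hv => ?_
    rcases (Walk.mem_support_append_iff (Q i) (R.walk (.inr i)).reverse).1 hv with hvQ | hvR'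
    · exact hRQ _ i v hvR hvQ
    · rw [Walk.support_reverse, List.mem_reverse] at hvR'
      exact absurd hvR' (R.disjoint Sum.inl_ne_inr v hvR)
  · simpa only [Walk.support_copy] using L.disjoint hij v

end SimpleGraph

open SimpleGraph

theorem IsNConnected.le_card_of_separates {V : Type*} {G : SimpleGraph V} {m : ℕ}
    (hG : IsNConnected G m) {A B : Set V} (hA : m ≤ A.ncard) (hB : m ≤ B.ncard) {S : Finset V}
    (hS : G.Separates A B S) : m ≤ S.card := by
  by_contra! hlt
  have hout : ∀ C : Set V, m ≤ C.ncard → ∃ v ∈ C, v ∉ S := fun C hC => by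
    by_contra! hCS
    have := Set.ncard_le_ncard (fun v hv => hCS v hv : C ⊆ ↑S) S.finite_toSet
    rw [Set.ncard_coe_finset] at this
    omega
  obtain ⟨a, ha, haS⟩ := hout A hA
  obtain ⟨b, hb, hbS⟩ := hout B hB
  obtain ⟨p⟩ := (hG.2 S hlt).preconnected ⟨a, haS⟩ ⟨b, hbS⟩
  let q : G.Walk a b := (p.map (Embedding.induce _).toHom).copy rfl rfl
  have hq : ∀ v ∈ q.support, v ∉ S := by
    rw [show q.support = p.support.map _ from
      (Walk.support_copy _ _ _).trans (Walk.support_map _ _)]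
    rintro _ h
    obtain ⟨u, -, rfl⟩ := List.mem_map.1 h
    exact u.2
  obtain ⟨v, hv, hvS⟩ := hS a ha b hb q
  exact hq v hv hvS

theorem IsKLinked.exists_paths_of_adj_imp {V : Type*} {G : SimpleGraph V} {s : Set V}
    {G' : SimpleGraph s} {k : ℕ} (hG' : IsKLinked G' k) (hsub : ∀ x y : s, G'.Adj x y → G.Adj x y)
    {u w : Fin k → s} (hinj : Injective (Sum.elim u w)) :
    ∃ Q : ∀ i, G.Walk (u i) (w i), (∀ i, (Q i).IsPath) ∧
      (∀ i j, i ≠ j → ∀ v ∈ (Q i).support, v ∉ (Q j).support) ∧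
      ∀ i, ∀ v ∈ (Q i).support, v ∈ s := by
  obtain ⟨Q, hQ, hQdisj⟩ := hG'.2 u w hinj
  let φ : G' →g G := ⟨Subtype.val, hsub _ _⟩
  refine ⟨fun i => (Q i).map φ, fun i => (hQ i).map Subtype.val_injective,
    fun i j hij v hvi hvj => ?_, fun i v hv => ?_⟩
  · simp only [Walk.support_map, List.mem_map] at hvi hvj
    obtain ⟨a, ha, rfl⟩ := hvi
    obtain ⟨a', ha', haa'⟩ := hvj
    exact hQdisj i j hij a ha (Subtype.ext haa' ▸ ha')
  · simp only [Walk.support_map, List.mem_map] at hv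
    obtain ⟨a, -, rfl⟩ := hv
    exact a.2

theorem isKLinked_of_subgraph_isKLinked_general {V : Type*} [Fintype V]
    (G : SimpleGraph V) (k : ℕ)
    (hconn : IsNConnected G (2 * k))
    (s : Set V) (G' : SimpleGraph s)
    (hsub : ∀ x y : s, G'.Adj x y → G.Adj x y)
    (hG' : IsKLinked G' k) :
    IsKLinked G k := by
  classical
  have hs : 2 * k ≤ s.ncard := hG'.1
  refine ⟨by have := hconn.1; omega, fun u w hinj => ?_⟩
  have hterm : 2 * k ≤ (Set.range (Sum.elim u w)).ncard := by
    rw [Set.ncard_range_of_injective hinj, Nat.card_sum, Nat.card_fin]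
    omega
  obtain ⟨R, hR, hRsrc⟩ := exists_isTrimmed_linkage_src_eq (G := G) _ hinj s fun S hS => by
    simpa [Fintype.card_sum, two_mul] using hconn.le_card_of_separates hterm hs hS
  let b : Fin k ⊕ Fin k → s := fun i => ⟨R.dst i, R.dst_mem i⟩
  have hb : Injective b := fun i j h => R.dst_injective (congrArg Subtype.val h)
  obtain ⟨Q, hQ, hQdisj, hQs⟩ :=
    hG'.exists_paths_of_adj_imp hsub (u := b ∘ .inl) (w := b ∘ .inr)
      (by rwa [Sum.elim_comp_inl_inr])
  exact hR.exists_paths_joining hRsrc Q hQ hQdisj hQs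

/-- If `G` is a `2k`-connected graph containing a `k`-linked subgraph `G'`
(a graph on a subset `s` of the vertices of `G` all of whose edges are edges
of `G`), then `G` is `k`-linked. -/
theorem isKLinked_of_subgraph_isKLinked {V : Type*} [Fintype V]
    (G : SimpleGraph V) (k : ℕ) (hk : 1 ≤ k)
    (hconn : IsNConnected G (2 * k))
    (s : Set V) (G' : SimpleGraph s)
    (hsub : ∀ x y : s, G'.Adj x y → G.Adj x y)
    (hG' : IsKLinked G' k) :
    IsKLinked G k :=
  isKLinked_of_subgraph_isKLinked_general G k hconn s G' hsub hG'
end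

section
/- Let d ≥ 2 and let X be a set of exactly d vertices of the d-cube graph Q_d such that the induced subgraph of Q_d on V(Q_d) \ X is disconnected. Then X is precisely the set of all neighbours of some vertex v of Q_d, and the induced subgraph on V(Q_d) \ X has exactly two connected components, one of which is the single vertex v. -/
open Finset

namespace SimpleGraph

variable {V : Type*} {G : SimpleGraph V}

theorem IsIsolated.eq_of_reachable {u v : V} (hv : G.IsIsolated v) (h : G.Reachable u v) :
    u = v := by
  obtain ⟨p⟩ := h.symm
  cases p with
  | nil => rfl
  | cons hadj _ => exact absurd hadj (hv _)

theorem card_connectedComponent_eq_two (hG : ¬ G.Preconnected) (v : V)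
    (hrest : ∀ a b, a ≠ v → b ≠ v → G.Reachable a b) : Nat.card G.ConnectedComponent = 2 := by
  obtain ⟨x, y, hxy⟩ : ∃ x y, ¬ G.Reachable x y := by simpa [Preconnected] using hG
  obtain ⟨u, huv, hu⟩ : ∃ u, u ≠ v ∧ ¬ G.Reachable v u := by
    by_cases hx : x = v
    · exact ⟨y, fun h => hxy (by rw [hx, h]), hx ▸ hxy⟩
    · refine ⟨x, hx, fun hvx => hxy ?_⟩
      by_cases hy : y = v
      · exact hy ▸ hvx.symm
      · exact hrest x y hx hy
  rw [Nat.card_eq_two_iff' (G.connectedComponentMk v)]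
  refine ⟨G.connectedComponentMk u, fun h => hu (ConnectedComponent.exact h).symm, ?_⟩
  intro C hC
  induction C using ConnectedComponent.ind with | h w => ?_
  have hwv : w ≠ v := by rintro rfl; exact hC rfl
  exact ConnectedComponent.sound (hrest w u hwv huv)

variable [Fintype V]

variable (G) in
noncomputable def induceComponentFinset (s : Set V) (x : s) : Finset V := by
  classical exact {w | ∃ hw : w ∈ s, (G.induce s).Reachable ⟨w, hw⟩ x}

variable {s : Set V} {x : s}

theorem mem_induceComponentFinset {w : V} :
    w ∈ G.induceComponentFinset s x ↔ ∃ hw : w ∈ s, (G.induce s).Reachable ⟨w, hw⟩ x := by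
  simp [induceComponentFinset]

theorem mem_induceComponentFinset_of_reachable {w : s} (h : (G.induce s).Reachable w x) :
    ↑w ∈ G.induceComponentFinset s x :=
  mem_induceComponentFinset.2 ⟨w.2, h⟩

variable [DecidableEq V] [DecidableRel G.Adj]

variable (G) in
def vertexBoundary (A : Finset V) : Finset V := {y | y ∉ A ∧ ∃ a ∈ A, G.Adj a y}

@[simp]
theorem mem_vertexBoundary {A : Finset V} {y : V} :
    y ∈ G.vertexBoundary A ↔ y ∉ A ∧ ∃ a ∈ A, G.Adj a y := by
  simp [vertexBoundary]

theorem vertexBoundary_compl_union_vertexBoundary_subset (A : Finset V) :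
    G.vertexBoundary (A ∪ G.vertexBoundary A)ᶜ ⊆ G.vertexBoundary A := by
  intro y hy
  obtain ⟨hyB, b, hbB, hby⟩ := mem_vertexBoundary.1 hy
  rw [mem_compl, not_not, mem_union] at hyB
  rw [mem_compl, mem_union, not_or] at hbB
  refine hyB.resolve_left fun hyA => hbB.2 ?_
  exact mem_vertexBoundary.2 ⟨hbB.1, y, hyA, hby.symm⟩

theorem vertexBoundary_induceComponentFinset_subset {w : V}
    (hw : w ∈ G.vertexBoundary (G.induceComponentFinset s x)) : w ∉ s := by
  obtain ⟨hwC, a, haC, haw⟩ := mem_vertexBoundary.1 hw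
  obtain ⟨ha, hax⟩ := mem_induceComponentFinset.1 haC
  intro hws
  exact hwC (mem_induceComponentFinset_of_reachable (w := ⟨w, hws⟩)
    ((show (G.induce s).Adj ⟨w, hws⟩ ⟨a, ha⟩ from haw.symm).reachable.trans hax))

theorem induceComponentFinset_subset_compl {y : s} (hxy : ¬ (G.induce s).Reachable x y) :
    G.induceComponentFinset s y ⊆ (G.induceComponentFinset s x ∪
      G.vertexBoundary (G.induceComponentFinset s x))ᶜ := by
  intro w hw
  obtain ⟨hws, hwy⟩ := mem_induceComponentFinset.1 hw
  simp only [mem_compl, mem_union, not_or]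
  refine ⟨fun hwx => ?_, fun hwb => vertexBoundary_induceComponentFinset_subset hwb hws⟩
  obtain ⟨_, hwx⟩ := mem_induceComponentFinset.1 hwx
  exact hxy (hwx.symm.trans hwy)

end SimpleGraph

section hammingDist

variable {β ι : Type*} [DecidableEq β] [Fintype ι] [DecidableEq ι]

theorem hammingDist_insertNth {n : ℕ} (i : Fin (n + 1)) (b c : β) (x y : Fin n → β) :
    hammingDist (i.insertNth b x : Fin (n + 1) → β) (i.insertNth c y) =
      (if b ≠ c then 1 else 0) + hammingDist x y := by
  simp only [hammingDist, card_filter, Fin.sum_univ_succAbove _ i, Fin.insertNth_apply_same,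
    Fin.insertNth_apply_succAbove]

theorem hammingDist_update_add (x y : ι → β) (i : ι) (b : β) :
    hammingDist (Function.update x i b) y + (if x i ≠ y i then 1 else 0) =
      hammingDist x y + (if b ≠ y i then 1 else 0) := by
  simp only [hammingDist, card_filter, Fintype.sum_eq_add_sum_compl i, Function.update_self]
  have : ∀ j ∈ ({i}ᶜ : Finset ι), Function.update x i b j = x j := fun j hj =>
    Function.update_of_ne (by simpa using hj) _ _
  rw [sum_congr rfl fun j hj => by rw [this j hj]]
  ring

theorem hammingDist_update_not_of_eq {x y : ι → Bool} {i : ι} (h : x i = y i) :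
    hammingDist (Function.update x i (!x i)) y = hammingDist x y + 1 := by
  simpa [h] using hammingDist_update_add x y i (!x i)

theorem hammingDist_update_not_of_ne {x y : ι → Bool} {i : ι} (h : x i ≠ y i) :
    hammingDist (Function.update x i (!x i)) y + 1 = hammingDist x y := by
  simpa [h, Bool.not_eq] using hammingDist_update_add x y i (!x i)

end hammingDist

namespace cubeGraph

variable {d : ℕ}

theorem adj_iff_hammingDist_eq_one {x y : Fin d → Bool} :
    (cubeGraph d).Adj x y ↔ hammingDist x y = 1 := by
  simp only [hammingDist, card_eq_one, Finset.ext_iff, mem_filter, mem_univ, true_and,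
    mem_singleton]
  refine exists_congr fun i => ⟨fun ⟨hi, hj⟩ j => ⟨fun h => ?_, fun h => h ▸ hi⟩,
    fun h => ⟨(h i).2 rfl, fun j hji => not_not.1 fun hne => hji ((h j).1 hne)⟩⟩
  exact not_not.1 fun hji => h (hj j hji)

instance : DecidableRel (cubeGraph d).Adj :=
  fun _ _ => decidable_of_iff _ adj_iff_hammingDist_eq_one.symm

theorem two_le_hammingDist_iff {x y : Fin d → Bool} :
    2 ≤ hammingDist x y ↔ x ≠ y ∧ ¬ (cubeGraph d).Adj x y := by
  rw [adj_iff_hammingDist_eq_one, ← hammingDist_ne_zero]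
  omega

theorem adj_update_not (x : Fin d → Bool) (i : Fin d) :
    (cubeGraph d).Adj x (Function.update x i (!x i)) := by
  rw [adj_iff_hammingDist_eq_one, hammingDist_comm]
  simpa using hammingDist_update_add x x i (!x i)

theorem isRegularOfDegree : (cubeGraph d).IsRegularOfDegree d := by
  intro v
  have hN : (cubeGraph d).neighborFinset v = univ.image fun i => Function.update v i (!v i) := by
    ext w
    simp only [SimpleGraph.mem_neighborFinset, mem_image, mem_univ, true_and]
    refine ⟨fun ⟨i, hi, hj⟩ => ⟨i, funext fun j => ?_⟩, fun ⟨i, hi⟩ => hi ▸ adj_update_not v i⟩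
    rcases eq_or_ne j i with rfl | hji
    · rw [Function.update_self, Bool.not_eq]
      exact hi
    · rw [Function.update_of_ne hji, hj j hji]
  have hinj : Function.Injective fun i => Function.update v i (!v i) := by
    intro i j hij
    by_contra hne
    have := congrFun hij i
    simp [Function.update_of_ne hne] at this
  rw [← SimpleGraph.card_neighborFinset_eq_degree, hN, card_image_of_injective _ hinj, card_univ,
    Fintype.card_fin]

theorem reachable_induce_of_two_le_hammingDist {v : Fin d → Bool} {s : Set (Fin d → Bool)}
    (hs : ∀ u, 2 ≤ hammingDist u v → u ∈ s) {x y : s} (hx : 2 ≤ hammingDist (x : Fin d → Bool) v)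
    (hy : 2 ≤ hammingDist (y : Fin d → Bool) v) : ((cubeGraph d).induce s).Reachable x y := by
  induction hn : hammingDist (x : Fin d → Bool) y generalizing x y with
  | zero => rw [hammingDist_eq_zero, Subtype.val_inj] at hn; rw [hn]
  | succ n ih =>
    obtain ⟨i, hi⟩ : ∃ i, x.1 i ≠ y.1 i := Function.ne_iff.1 (hammingDist_ne_zero.1 (by omega))
    have step : ∀ a b : s, 2 ≤ hammingDist a.1 v → 2 ≤ hammingDist b.1 v →
        hammingDist a.1 b = n + 1 → a.1 i = v i → a.1 i ≠ b.1 i →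
        ((cubeGraph d).induce s).Reachable a b := by
      intro a b ha hb hab hav hab'
      have ha' : 2 ≤ hammingDist (Function.update a.1 i (!a.1 i)) v := by
        rw [hammingDist_update_not_of_eq hav]; omega
      have hadj : ((cubeGraph d).induce s).Adj a ⟨_, hs _ ha'⟩ := adj_update_not a.1 i
      exact hadj.reachable.trans
        (ih ha' hb (by have := hammingDist_update_not_of_ne hab'; dsimp only; omega))
    have hv : v i = x.1 i ∨ v i = y.1 i := by
      revert hi; cases v i <;> cases x.1 i <;> cases y.1 i <;> simp
    rcases hv with hv | hv
    · exact step x y hx hy hn hv.symm hi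
    · exact (step y x hy hx (hammingDist_comm x.1 y.1 ▸ hn) hv.symm (Ne.symm hi)).symm

local notation "∂" A:max => SimpleGraph.vertexBoundary (cubeGraph _) A

/-- The trace of `S` on the half `{x | x i = c}` of `Q_(d+1)`, identified with `Q_d` by deleting
the coordinate `i`. -/
def slice (i : Fin (d + 1)) (c : Bool) (S : Finset (Fin (d + 1) → Bool)) :
    Finset (Fin d → Bool) :=
  {x | (i.insertNth c x : Fin (d + 1) → Bool) ∈ S}

variable {i : Fin (d + 1)} {c : Bool} {S T A : Finset (Fin (d + 1) → Bool)} {x : Fin d → Bool}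

@[simp]
theorem mem_slice : x ∈ slice i c S ↔ (i.insertNth c x : Fin (d + 1) → Bool) ∈ S := by
  simp [slice]

theorem slice_mono (h : S ⊆ T) : slice i c S ⊆ slice i c T :=
  fun _ hx => mem_slice.2 (h (mem_slice.1 hx))

theorem slice_union : slice i c (S ∪ T) = slice i c S ∪ slice i c T := by
  ext; simp

variable (i c S) in
theorem card_slice : #(slice i c S) = #{x ∈ S | x i = c} :=
  card_nbij' (fun x => i.insertNth c x) i.removeNth (fun x hx => by simpa using hx)
    (fun a ha => by obtain ⟨ha, rfl⟩ := mem_filter.1 ha; simpa) (fun x _ => by simp)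
    (fun a ha => by obtain ⟨-, rfl⟩ := mem_filter.1 ha; simp)

variable (i c S) in
theorem card_slice_add_card_slice_not : #(slice i c S) + #(slice i (!c) S) = #S := by
  simp only [card_slice, Bool.eq_not, card_filter_add_card_filter_not]

theorem slice_nonempty_of_mem {a : Fin (d + 1) → Bool} (ha : a ∈ S) :
    (slice i (a i) S).Nonempty :=
  ⟨i.removeNth a, by simpa [Fin.insertNth_self_removeNth]⟩

theorem vertexBoundary_slice_subset : ∂(slice i c A) ⊆ slice i c (∂A) := by
  intro y
  simp only [SimpleGraph.mem_vertexBoundary, mem_slice]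
  rintro ⟨hy, a, ha, hay⟩
  refine ⟨hy, _, ha, ?_⟩
  rw [adj_iff_hammingDist_eq_one] at hay
  rw [adj_iff_hammingDist_eq_one, hammingDist_insertNth]
  simpa using hay

theorem slice_not_subset_slice_vertexBoundary (h : slice i c A = ∅) :
    slice i (!c) A ⊆ slice i c (∂A) := by
  intro x hx
  rw [mem_slice] at hx
  simp only [mem_slice, SimpleGraph.mem_vertexBoundary]
  refine ⟨fun hxA => ?_, _, hx, ?_⟩
  · simpa [h] using mem_slice.2 hxA
  · rw [adj_iff_hammingDist_eq_one, hammingDist_insertNth, hammingDist_self]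
    simp

section Isoperimetry

variable (IH : ∀ {B : Finset (Fin d → Bool)}, B.Nonempty → (B ∪ ∂B)ᶜ.Nonempty → d ≤ #(∂B))
include IH

theorem le_card_slice_vertexBoundary (hA : (slice i c A).Nonempty)
    (hA' : (slice i c (A ∪ ∂A)ᶜ).Nonempty) : d ≤ #(slice i c (∂A)) := by
  refine (IH hA ?_).trans (card_le_card vertexBoundary_slice_subset)
  obtain ⟨z, hz⟩ := hA'
  refine ⟨z, ?_⟩
  simp only [mem_compl, mem_union, not_or, mem_slice] at hz ⊢
  exact ⟨hz.1, fun h => hz.2 (mem_slice.1 (vertexBoundary_slice_subset h))⟩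

theorem succ_le_card_vertexBoundary_of_slice_eq_empty (hA : slice i c A = ∅)
    (hA' : (slice i (!c) A).Nonempty) : d + 1 ≤ #(∂A) := by
  have hsplit := card_slice_add_card_slice_not i c (∂A)
  have hflip := card_le_card (slice_not_subset_slice_vertexBoundary hA)
  by_cases hext : (slice i (!c) (A ∪ ∂A)ᶜ).Nonempty
  · have := le_card_slice_vertexBoundary IH hA' hext
    have := hA'.card_pos
    omega
  · have hcover : slice i (!c) (A ∪ ∂A) = univ := by
      rw [not_nonempty_iff_eq_empty, eq_empty_iff_forall_notMem] at hext
      exact eq_univ_of_forall fun x => by simpa only [mem_slice, mem_compl, not_not] using hext x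
    have : 2 ^ d ≤ #(slice i (!c) A) + #(slice i (!c) (∂A)) := by
      calc 2 ^ d = #(slice i (!c) (A ∪ ∂A)) := by simp [hcover]
        _ ≤ _ := slice_union ▸ card_union_le _ _
    have := d.lt_two_pow_self
    omega

end Isoperimetry

theorem le_card_vertexBoundary {A : Finset (Fin d → Bool)} (hA : A.Nonempty)
    (hA' : (A ∪ ∂A)ᶜ.Nonempty) : d ≤ #(∂A) := by
  induction d with
  | zero => exact Nat.zero_le _
  | succ d IH =>
    have slice_not_nonempty : ∀ {S : Finset (Fin (d + 1) → Bool)} {c : Bool}, S.Nonempty →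
        slice 0 c S = ∅ → (slice 0 (!c) S).Nonempty := fun {S c} hS hc => by
      have := card_slice_add_card_slice_not 0 c S
      rw [hc, card_empty, zero_add] at this
      exact card_pos.1 (this ▸ hS.card_pos)
    by_cases hA0 : ∃ c, slice 0 c A = ∅
    · obtain ⟨c, hc⟩ := hA0
      exact succ_le_card_vertexBoundary_of_slice_eq_empty IH hc (slice_not_nonempty hA hc)
    by_cases hB0 : ∃ c, slice 0 c (A ∪ ∂A)ᶜ = ∅
    · obtain ⟨c, hc⟩ := hB0
      exact (succ_le_card_vertexBoundary_of_slice_eq_empty IH hc (slice_not_nonempty hA' hc)).trans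
        (card_le_card (SimpleGraph.vertexBoundary_compl_union_vertexBoundary_subset A))
    push Not at hA0 hB0
    cases d with
    | zero =>
      obtain ⟨a, ha⟩ := hA0 false
      obtain ⟨b, hb⟩ := hB0 false
      rw [Subsingleton.elim b a, mem_slice, mem_compl, mem_union, not_or] at hb
      exact absurd (mem_slice.1 ha) hb.1
    | succ d =>
      have h₀ := le_card_slice_vertexBoundary IH (hA0 false) (hB0 false)
      have h₁ := le_card_slice_vertexBoundary IH (hA0 true) (hB0 true)
      have := card_slice_add_card_slice_not 0 false (∂A)
      rw [Bool.not_false] at this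
      omega

theorem succ_le_card_vertexBoundary (hd : 3 ≤ d) {A : Finset (Fin d → Bool)}
    {a b : Fin d → Bool} (ha : a ∈ A) (hb : b ∈ A) (hab : (cubeGraph d).Adj a b)
    (hA' : 1 < #(A ∪ ∂A)ᶜ) : d + 1 ≤ #(∂A) := by
  obtain ⟨d, rfl⟩ : ∃ e, d = e + 1 := ⟨d - 1, by omega⟩
  obtain ⟨i, hi, -⟩ := hab
  have hAi : ∀ c, (slice i c A).Nonempty := by
    intro c
    obtain rfl | rfl : c = a i ∨ c = b i := by
      revert hi; cases c <;> cases a i <;> cases b i <;> simp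
    exacts [slice_nonempty_of_mem ha, slice_nonempty_of_mem hb]
  have IH := fun {B} => @le_card_vertexBoundary d B
  have hsplit := card_slice_add_card_slice_not i false (∂A)
  rw [Bool.not_false] at hsplit
  by_cases hB0 : ∃ c, slice i c (A ∪ ∂A)ᶜ = ∅
  · obtain ⟨c, hc⟩ := hB0
    have hsplitB := card_slice_add_card_slice_not i c (A ∪ ∂A)ᶜ
    rw [hc, card_empty, zero_add] at hsplitB
    have h₀ := le_card_slice_vertexBoundary IH (hAi (!c)) (card_pos.1 (by omega))
    have h₁ : #(slice i (!c) (A ∪ ∂A)ᶜ) ≤ #(slice i c (∂A)) :=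
      card_le_card ((slice_not_subset_slice_vertexBoundary hc).trans
        (slice_mono (SimpleGraph.vertexBoundary_compl_union_vertexBoundary_subset A)))
    have := card_slice_add_card_slice_not i c (∂A)
    omega
  · push Not at hB0
    have h₀ := le_card_slice_vertexBoundary IH (hAi false) (hB0 false)
    have h₁ := le_card_slice_vertexBoundary IH (hAi true) (hB0 true)
    omega

theorem exists_isIsolated_induce_of_not_preconnected {X : Finset (Fin d → Bool)} (hX : #X = d)
    (h : ¬ ((cubeGraph d).induce {x | x ∉ X}).Preconnected) :
    ∃ v, ((cubeGraph d).induce {x | x ∉ X}).IsIsolated v := by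
  obtain ⟨x, y, hxy⟩ : ∃ x y, ¬ ((cubeGraph d).induce {x | x ∉ X}).Reachable x y := by
    simpa [SimpleGraph.Preconnected] using h
  by_contra! hiso
  obtain ⟨x', hxx'⟩ := SimpleGraph.exists_adj_iff_not_isIsolated.2 (hiso x)
  obtain ⟨y', hyy'⟩ := SimpleGraph.exists_adj_iff_not_isIsolated.2 (hiso y)
  set A := (cubeGraph d).induceComponentFinset {x | x ∉ X} x
  set B := (cubeGraph d).induceComponentFinset {x | x ∉ X} y
  have hxA : ↑x ∈ A := SimpleGraph.mem_induceComponentFinset_of_reachable .rfl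
  have hx'A : ↑x' ∈ A := SimpleGraph.mem_induceComponentFinset_of_reachable hxx'.reachable.symm
  have hA : 1 < #A := one_lt_card.2 ⟨x, hxA, x', hx'A, fun h => hxx'.ne (Subtype.ext h)⟩
  have hB : 1 < #B := one_lt_card.2 ⟨y, SimpleGraph.mem_induceComponentFinset_of_reachable .rfl,
    y', SimpleGraph.mem_induceComponentFinset_of_reachable hyy'.reachable.symm,
    fun h => hyy'.ne (Subtype.ext h)⟩
  have hBA := SimpleGraph.induceComponentFinset_subset_compl hxy
  rcases le_or_gt d 2 with hd | hd
  · have hAB : A ∪ B ⊆ Xᶜ := union_subset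
      (fun w hw => mem_compl.2 (SimpleGraph.mem_induceComponentFinset.1 hw).1)
      (fun w hw => mem_compl.2 (SimpleGraph.mem_induceComponentFinset.1 hw).1)
    have hdisj : Disjoint A B := disjoint_right.2 fun w hwB hwA =>
      mem_compl.1 (hBA hwB) (mem_union_left _ hwA)
    have := card_le_card hAB
    rw [card_union_of_disjoint hdisj, card_compl, hX] at this
    have : Fintype.card (Fin d → Bool) ≤ d + 2 := by
      rw [Fintype.card_fun, Fintype.card_bool, Fintype.card_fin]
      interval_cases d <;> norm_num
    omega
  · have := succ_le_card_vertexBoundary hd hxA hx'A hxx' (hB.trans_le (card_le_card hBA))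
    have := card_le_card (show ∂A ⊆ X from fun w hw =>
      not_not.1 (SimpleGraph.vertexBoundary_induceComponentFinset_subset hw))
    omega

end cubeGraph

open cubeGraph

theorem cube_separator_card_d_general (d : ℕ)
    (X : Finset (Fin d → Bool)) (hcard : X.card = d)
    (hdisc : ¬ ((cubeGraph d).induce {x : Fin d → Bool | x ∉ X}).Connected) :
    ∃ v : Fin d → Bool, ∃ hv : v ∉ X,
      (↑X : Set (Fin d → Bool)) = (cubeGraph d).neighborSet v ∧
      Nat.card
        ((cubeGraph d).induce {x : Fin d → Bool | x ∉ X}).ConnectedComponent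
        = 2 ∧
      ∀ x : {x : Fin d → Bool | x ∉ X},
        ((cubeGraph d).induce {x : Fin d → Bool | x ∉ X}).Reachable x ⟨v, hv⟩ →
          (x : Fin d → Bool) = v := by
  have hpre : ¬ ((cubeGraph d).induce {x | x ∉ X}).Preconnected := by
    obtain ⟨u, -, hu⟩ := exists_mem_notMem_of_card_lt_card (s := X) (t := univ)
      (by simpa [hcard] using d.lt_two_pow_self)
    exact fun h => hdisc ((SimpleGraph.connected_iff _).2 ⟨h, ⟨⟨u, hu⟩⟩⟩)
  obtain ⟨⟨v, hv⟩, hiso⟩ := exists_isIsolated_induce_of_not_preconnected hcard hpre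
  have hX : (cubeGraph d).neighborFinset v = X := by
    refine eq_of_subset_of_card_le (fun w hw => not_not.1 fun hwX => hiso ⟨w, hwX⟩
      (((cubeGraph d).mem_neighborFinset v w).1 hw)) ?_
    rw [SimpleGraph.card_neighborFinset_eq_degree, isRegularOfDegree.degree_eq, hcard]
  have hfar : ∀ u, 2 ≤ hammingDist u v ↔ u ≠ v ∧ u ∉ X := fun u => by
    rw [two_le_hammingDist_iff, ← hX, SimpleGraph.mem_neighborFinset, SimpleGraph.adj_comm]
  refine ⟨v, hv, by rw [← hX, SimpleGraph.coe_neighborFinset], ?_,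
    fun x hx => congrArg Subtype.val (hiso.eq_of_reachable hx)⟩
  refine SimpleGraph.card_connectedComponent_eq_two hpre ⟨v, hv⟩ fun a b ha hb => ?_
  exact reachable_induce_of_two_le_hammingDist (fun u hu => ((hfar u).1 hu).2)
    ((hfar a).2 ⟨fun h => ha (Subtype.ext h), a.2⟩) ((hfar b).2 ⟨fun h => hb (Subtype.ext h), b.2⟩)

/-- If a set `X` of exactly `d` vertices separates the `d`-cube graph
(`d ≥ 2`), then `X` is the set of all neighbours of some vertex `v`, and the
graph induced on the complement of `X` has exactly two connected components,
one of which is the single vertex `v`. -/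
theorem cube_separator_card_d (d : ℕ) (hd : 2 ≤ d)
    (X : Finset (Fin d → Bool)) (hcard : X.card = d)
    (hdisc : ¬ ((cubeGraph d).induce {x : Fin d → Bool | x ∉ X}).Connected) :
    ∃ v : Fin d → Bool, ∃ hv : v ∉ X,
      (↑X : Set (Fin d → Bool)) = (cubeGraph d).neighborSet v ∧
      Nat.card
        ((cubeGraph d).induce {x : Fin d → Bool | x ∉ X}).ConnectedComponent
        = 2 ∧
      ∀ x : {x : Fin d → Bool | x ∉ X},
        ((cubeGraph d).induce {x : Fin d → Bool | x ∉ X}).Reachable x ⟨v, hv⟩ →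
          (x : Fin d → Bool) = v :=
  cube_separator_card_d_general d X hcard hdisc
end

section
/- Let d ≥ 2 and let X be a set of exactly d vertices of the d-cube graph Q_d such that the induced subgraph of Q_d on V(Q_d) \ X is disconnected. Then X is an independent set: no two vertices of X are adjacent in Q_d. -/
namespace SimpleGraph

variable {V W : Type*} {G : SimpleGraph V}

theorem Preconnected.induce_image {H : SimpleGraph W} (f : H →g G) {s : Set W}
    (h : (H.induce s).Preconnected) : (G.induce (f '' s)).Preconnected := by
  rintro ⟨_, a, ha, rfl⟩ ⟨_, b, hb, rfl⟩
  let g : H.induce s →g G.induce (f '' s) := ⟨fun x => ⟨f x, x, x.2, rfl⟩, f.map_rel⟩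
  exact (h ⟨a, ha⟩ ⟨b, hb⟩).map g

theorem Preconnected.induce_of_forall_exists_adj {s t : Set V}
    (hs : (G.induce s).Preconnected) (hst : s ⊆ t) (hadj : ∀ v ∈ t, v ∉ s → ∃ u ∈ s, G.Adj v u) :
    (G.induce t).Preconnected := by
  have reach_s : ∀ v (hv : v ∈ t), ∃ u, ∃ hu : u ∈ s,
      (G.induce t).Reachable ⟨v, hv⟩ ⟨u, hst hu⟩ := by
    intro v hv
    by_cases hvs : v ∈ s
    · exact ⟨v, hvs, .rfl⟩
    · obtain ⟨u, hu, hvu⟩ := hadj v hv hvs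
      exact ⟨u, hu, Adj.reachable hvu⟩
  rintro ⟨a, ha⟩ ⟨b, hb⟩
  obtain ⟨a', ha', haa'⟩ := reach_s a ha
  obtain ⟨b', hb', hbb'⟩ := reach_s b hb
  exact haa'.trans <| ((hs ⟨a', ha'⟩ ⟨b', hb'⟩).map (induceHomOfLE G hst).toHom).trans hbb'.symm

end SimpleGraph

open SimpleGraph

variable {m : ℕ}

theorem cubeGraph.adj_update {n : ℕ} (a : Fin n → Bool) {i : Fin n} {c : Bool} (h : a i ≠ c) :
    (cubeGraph n).Adj a (Function.update a i c) :=
  ⟨i, by simpa using h, fun j hj => by simp [hj]⟩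

theorem cubeGraph.adj_insertNth_insertNth (i : Fin (m + 1)) {c c' : Bool} (h : c ≠ c')
    (w : Fin m → Bool) : (cubeGraph (m + 1)).Adj (i.insertNth c w) (i.insertNth c' w) := by
  simpa using cubeGraph.adj_update (i.insertNth c w) (i := i) (c := c') (by simpa using h)

def cubeGraph.insertNthHom (i : Fin (m + 1)) (c : Bool) : cubeGraph m →g cubeGraph (m + 1) where
  toFun w := i.insertNth c w
  map_rel' := by
    rintro x y ⟨j, hj, hxy⟩
    refine ⟨i.succAbove j, by simpa using hj, fun k hk => ?_⟩
    rcases eq_or_ne k i with rfl | hki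
    · simp
    · obtain ⟨k, rfl⟩ := Fin.exists_succAbove_eq hki
      simpa using hxy k (by rintro rfl; exact hk rfl)

@[simp]
theorem cubeGraph.insertNthHom_apply (i : Fin (m + 1)) (c : Bool) (w : Fin m → Bool) :
    cubeGraph.insertNthHom i c w = i.insertNth c w :=
  rfl

-- The trace of `S` on the subcube `{x | x i = c}`, read in `Q_m` through `i.insertNth c`.
def cubeSlice (S : Finset (Fin (m + 1) → Bool)) (i : Fin (m + 1)) (c : Bool) :
    Finset (Fin m → Bool) :=
  (S.filter (· i = c)).image i.removeNth

theorem mem_cubeSlice {S : Finset (Fin (m + 1) → Bool)} {i : Fin (m + 1)} {c : Bool}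
    {w : Fin m → Bool} : w ∈ cubeSlice S i c ↔ i.insertNth c w ∈ S := by
  simp only [cubeSlice, Finset.mem_image, Finset.mem_filter]
  constructor
  · rintro ⟨z, ⟨hz, rfl⟩, rfl⟩
    simpa using hz
  · exact fun h => ⟨_, ⟨h, by simp⟩, by simp⟩

theorem card_cubeSlice_le (S : Finset (Fin (m + 1) → Bool)) (i : Fin (m + 1)) (c : Bool) :
    (cubeSlice S i c).card ≤ (S.filter (· i = c)).card :=
  Finset.card_image_le

theorem card_cubeSlice_lt_card {S : Finset (Fin (m + 1) → Bool)} {s t : Fin (m + 1) → Bool}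
    (hs : s ∈ S) (ht : t ∈ S) {i : Fin (m + 1)} (hst : s i ≠ t i) (c : Bool) :
    (cubeSlice S i c).card < S.card := by
  refine (card_cubeSlice_le S i c).trans_lt (Finset.card_lt_card (Finset.filter_ssubset.mpr ?_))
  by_cases hc : s i = c
  · exact ⟨t, ht, fun h => hst (hc.trans h.symm)⟩
  · exact ⟨s, hs, hc⟩

theorem exists_forall_insertNth_notMem (S : Finset (Fin (m + 1) → Bool)) (i : Fin (m + 1))
    (hS : (S.image i.removeNth).card < 2 ^ m) : ∃ w : Fin m → Bool, ∀ c, i.insertNth c w ∉ S := by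
  obtain ⟨w, hw⟩ : ∃ w, w ∉ S.image i.removeNth := by
    by_contra! h
    simp [Finset.eq_univ_of_forall h] at hS
  exact ⟨w, fun c hc => hw (Finset.mem_image.mpr ⟨_, hc, by simp⟩)⟩

theorem image_insertNthHom_compl_cubeSlice (S : Finset (Fin (m + 1) → Bool)) (i : Fin (m + 1))
    (c : Bool) :
    cubeGraph.insertNthHom i c '' {w | w ∉ cubeSlice S i c} = {x | x ∉ S ∧ x i = c} := by
  ext x
  simp only [Set.mem_image, Set.mem_ofPred_eq, mem_cubeSlice, cubeGraph.insertNthHom_apply]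
  constructor
  · rintro ⟨w, hw, rfl⟩
    simpa using hw
  · rintro ⟨hx, rfl⟩
    exact ⟨i.removeNth x, by simpa using hx, by simp⟩

theorem preconnected_cubeGraph_induce_of_cubeSlice {S : Finset (Fin (m + 1) → Bool)}
    {i : Fin (m + 1)} {c : Bool}
    (hslice : ((cubeGraph m).induce {w | w ∉ cubeSlice S i c}).Preconnected)
    (hflip : ∀ a ∉ S, a i ≠ c → Function.update a i c ∉ S) :
    ((cubeGraph (m + 1)).induce {x | x ∉ S}).Preconnected := by
  have hside := hslice.induce_image (cubeGraph.insertNthHom i c)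
  rw [image_insertNthHom_compl_cubeSlice] at hside
  refine hside.induce_of_forall_exists_adj (fun x hx => hx.1) fun a ha ha' => ?_
  have hac : a i ≠ c := fun h => ha' ⟨ha, h⟩
  exact ⟨_, ⟨hflip a ha hac, by simp⟩, cubeGraph.adj_update a hac⟩

theorem connected_cubeGraph_induce_of_cubeSlices {S : Finset (Fin (m + 1) → Bool)}
    {i : Fin (m + 1)} (hslice : ∀ c, ((cubeGraph m).induce {w | w ∉ cubeSlice S i c}).Preconnected)
    {w : Fin m → Bool} (hw : ∀ c, i.insertNth c w ∉ S) :
    ((cubeGraph (m + 1)).induce {x | x ∉ S}).Connected := by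
  have hsides : {x | x ∉ S} = {x | x ∉ S ∧ x i = false} ∪ {x | x ∉ S ∧ x i = true} := by
    ext x
    rcases Bool.eq_false_or_eq_true (x i) with h | h <;> simp [h]
  rw [hsides, ← image_insertNthHom_compl_cubeSlice, ← image_insertNthHom_compl_cubeSlice]
  exact connected_induce_union ((hslice false).induce_image _) ((hslice true).induce_image _)
    ⟨w, mem_cubeSlice.not.mpr (hw false), rfl⟩ ⟨w, mem_cubeSlice.not.mpr (hw true), rfl⟩
    (cubeGraph.adj_insertNth_insertNth i Bool.false_ne_true w)

-- The disjunct `S.card ≤ 1` carries the induction through `n ≤ 1`.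
theorem preconnected_cubeGraph_induce_of_card_lt_or_le_one {n : ℕ} (S : Finset (Fin n → Bool))
    (hS : S.card < n ∨ S.card ≤ 1) : ((cubeGraph n).induce {x | x ∉ S}).Preconnected := by
  induction n with
  | zero =>
    intro u v
    rw [Subsingleton.elim u v]
  | succ m ih =>
    by_cases hS1 : S.card ≤ 1
    · obtain ⟨s, hs⟩ := Finset.card_le_one_iff_subset_singleton.mp hS1
      have hoff : ∀ a ∈ S, a 0 ≠ !s 0 := fun a ha => by
        rw [Finset.mem_singleton.mp (hs ha)]
        exact Bool.ne_not.mpr rfl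
      refine preconnected_cubeGraph_induce_of_cubeSlice (i := 0) (c := !s 0) (ih _ (Or.inr ?_))
        fun a _ _ ha => hoff _ ha (by simp)
      refine (card_cubeSlice_le S 0 _).trans ?_
      rw [Finset.filter_eq_empty_iff.mpr hoff]
      simp
    · obtain ⟨s, hs, t, ht, hst⟩ := Finset.one_lt_card.mp (not_le.mp hS1)
      obtain ⟨i, hi⟩ := Function.ne_iff.mp hst
      have hSm : S.card ≤ m := Nat.le_of_lt_succ (hS.resolve_right hS1)
      obtain ⟨w, hw⟩ := exists_forall_insertNth_notMem S i
        (Finset.card_image_le.trans_lt (hSm.trans_lt Nat.lt_two_pow_self))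
      refine (connected_cubeGraph_induce_of_cubeSlices (fun c => ih _ (Or.inl ?_)) hw).preconnected
      exact (card_cubeSlice_lt_card hs ht hi c).trans_le hSm

theorem preconnected_cubeGraph_induce_of_card_filter_le_one {X : Finset (Fin (m + 1) → Bool)}
    {x y : Fin (m + 1) → Bool} (hx : x ∈ X) (hy : y ∈ X) {i : Fin (m + 1)} (hi : x i ≠ y i)
    (hxy : ∀ j ≠ i, x j = y j) (hside : (X.filter (· i = y i)).card ≤ 1) :
    ((cubeGraph (m + 1)).induce {x | x ∉ X}).Preconnected := by
  have hslice := preconnected_cubeGraph_induce_of_card_lt_or_le_one _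
    (Or.inr ((card_cubeSlice_le X i (y i)).trans hside))
  refine preconnected_cubeGraph_induce_of_cubeSlice hslice fun a ha hai hflip => ha ?_
  have hflip_eq : Function.update a i (y i) = y := Finset.card_le_one.mp hside _
    (Finset.mem_filter.mpr ⟨hflip, by simp⟩) _ (Finset.mem_filter.mpr ⟨hy, rfl⟩)
  convert hx using 1
  funext j
  rcases eq_or_ne j i with rfl | hj
  · exact (Bool.eq_not_of_ne hai).trans (Bool.eq_not_of_ne hi).symm
  · rw [hxy j hj, ← hflip_eq, Function.update_of_ne hj]

theorem connected_cubeGraph_induce_of_card_filter_lt {X : Finset (Fin (m + 1) → Bool)}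
    (hcard : X.card = m + 1) {x y : Fin (m + 1) → Bool} (hx : x ∈ X) (hy : y ∈ X)
    {i : Fin (m + 1)} (hi : x i ≠ y i) (hxy : ∀ j ≠ i, x j = y j)
    (hside : ∀ c, (X.filter (· i = c)).card < m) :
    ((cubeGraph (m + 1)).induce {x | x ∉ X}).Connected := by
  have hremove : i.removeNth x = i.removeNth y := funext fun j => hxy _ (Fin.succAbove_ne i j)
  have himage : X.image i.removeNth ⊆ (X.erase y).image i.removeNth := by
    intro w hw
    obtain ⟨z, hz, rfl⟩ := Finset.mem_image.mp hw
    rcases eq_or_ne z y with rfl | hzy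
    · exact Finset.mem_image.mpr ⟨x, Finset.mem_erase.mpr ⟨fun h => hi (h ▸ rfl), hx⟩, hremove⟩
    · exact Finset.mem_image_of_mem _ (Finset.mem_erase.mpr ⟨hzy, hz⟩)
  have hcard_image : (X.image i.removeNth).card ≤ m :=
    calc _ ≤ ((X.erase y).image i.removeNth).card := Finset.card_le_card himage
      _ ≤ (X.erase y).card := Finset.card_image_le
      _ = m := by rw [Finset.card_erase_of_mem hy, hcard, Nat.add_sub_cancel]
  obtain ⟨w, hw⟩ := exists_forall_insertNth_notMem X i (hcard_image.trans_lt Nat.lt_two_pow_self)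
  refine connected_cubeGraph_induce_of_cubeSlices (fun c => ?_) hw
  exact preconnected_cubeGraph_induce_of_card_lt_or_le_one _
    (Or.inl ((card_cubeSlice_le X i c).trans_lt (hside c)))

theorem connected_cubeGraph_induce_of_adj {X : Finset (Fin (m + 1) → Bool)}
    (hcard : X.card = m + 1) {x y : Fin (m + 1) → Bool} (hx : x ∈ X) (hy : y ∈ X)
    (hadj : (cubeGraph (m + 1)).Adj x y) :
    ((cubeGraph (m + 1)).induce {x | x ∉ X}).Connected := by
  obtain ⟨i, hi, hxy⟩ := hadj
  obtain ⟨z, -, hz⟩ := Finset.exists_mem_notMem_of_card_lt_card (s := X) (t := Finset.univ)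
    (by simp [hcard, Nat.lt_two_pow_self])
  have hnonempty : Nonempty {x | x ∉ X} := ⟨⟨z, hz⟩⟩
  have hsum : (X.filter (· i = x i)).card + (X.filter (· i = y i)).card = m + 1 := by
    rw [Bool.eq_not_of_ne hi.symm]
    convert (Finset.card_filter_add_card_filter_not (s := X) (· i = x i)).trans hcard using 4
    exact Bool.eq_not_iff
  by_cases hy1 : (X.filter (· i = y i)).card ≤ 1
  · exact ⟨preconnected_cubeGraph_induce_of_card_filter_le_one hx hy hi hxy hy1⟩
  by_cases hx1 : (X.filter (· i = x i)).card ≤ 1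
  · exact ⟨preconnected_cubeGraph_induce_of_card_filter_le_one hy hx hi.symm
      (fun j hj => (hxy j hj).symm) hx1⟩
  refine connected_cubeGraph_induce_of_card_filter_lt hcard hx hy hi hxy fun c => ?_
  rcases Bool.eq_or_eq_not c (x i) with rfl | rfl
  · omega
  · rw [← Bool.eq_not_of_ne hi.symm]; omega

theorem cube_separator_independent_general (d : ℕ)
    (X : Finset (Fin d → Bool)) (hcard : X.card = d)
    (hdisc : ¬ ((cubeGraph d).induce {x : Fin d → Bool | x ∉ X}).Connected) :
    ∀ x ∈ X, ∀ y ∈ X, ¬ (cubeGraph d).Adj x y := by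
  intro x hx y hy hadj
  obtain ⟨m, rfl⟩ : ∃ m, d = m + 1 := Nat.exists_eq_add_one_of_ne_zero hadj.choose.pos.ne'
  exact hdisc (connected_cubeGraph_induce_of_adj hcard hx hy hadj)

/-- A separator of cardinality `d` in the `d`-cube graph (`d ≥ 2`) is an
independent set: no two of its vertices are adjacent. -/
theorem cube_separator_independent (d : ℕ) (hd : 2 ≤ d)
    (X : Finset (Fin d → Bool)) (hcard : X.card = d)
    (hdisc : ¬ ((cubeGraph d).induce {x : Fin d → Bool | x ∉ X}).Connected) :
    ∀ x ∈ X, ∀ y ∈ X, ¬ (cubeGraph d).Adj x y :=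
  cube_separator_independent_general d X hcard hdisc
end

section
/- Let s_1, s_2, t_1, t_2 be four distinct vertices of the 3-cube graph Q_3 that all agree in some fixed coordinate c (so that all four lie in a common 2-face of the 3-cube), and suppose that s_1 is not adjacent to t_1 and s_2 is not adjacent to t_2 in Q_3 (so the four vertices appear in the cyclic order s_1, s_2, t_1, t_2 on that 2-face). Then there do not exist two vertex-disjoint paths in Q_3, one joining s_1 to t_1 and one joining s_2 to t_2. In particular, the 3-cube graph Q_3 is not 2-linked. -/
/-!
Let `s₁ s₂ t₁ t₂` be the 4-cycle bounding the face `x c = b` of the 3-cube, and write `x'` for the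
vertex obtained from `x` by flipping coordinate `c`. Every vertex has one neighbour `x'` off its
face and, since the face has only four vertices, its two cycle-neighbours inside it. A path from
`s₂` to `t₂` avoiding `s₁, t₁` therefore passes through `s₂'` and `t₂'`. A path from `s₁` to `t₁`
must leave `{s₁, s₁'}`, and the only exits are `s₂, t₂, s₂', t₂'`: both paths meet.
-/

open SimpleGraph

section Flip

variable {d : ℕ}

def cubeFlip (c : Fin d) (x : Fin d → Bool) : Fin d → Bool :=
  Function.update x c (!x c)

@[simp]
lemma cubeFlip_apply_self (c : Fin d) (x : Fin d → Bool) : cubeFlip c x c = !x c := by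
  simp [cubeFlip]

lemma cubeFlip_apply_eq_iff (c i : Fin d) (x y : Fin d → Bool) :
    cubeFlip c x i = cubeFlip c y i ↔ x i = y i := by
  by_cases h : i = c
  · subst h; simp
  · simp [cubeFlip, Function.update_of_ne h]

@[simp]
lemma cubeFlip_cubeFlip (c : Fin d) (x : Fin d → Bool) : cubeFlip c (cubeFlip c x) = x := by
  funext i
  by_cases h : i = c
  · subst h; simp
  · simp [cubeFlip, Function.update_of_ne h]

lemma cubeFlip_involutive (c : Fin d) : Function.Involutive (cubeFlip c) :=
  cubeFlip_cubeFlip c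

lemma cubeGraph_adj_cubeFlip_cubeFlip {c : Fin d} {x y : Fin d → Bool} :
    (cubeGraph d).Adj (cubeFlip c x) (cubeFlip c y) ↔ (cubeGraph d).Adj x y := by
  simp only [cubeGraph, ne_eq, cubeFlip_apply_eq_iff]

lemma cubeGraph.eq_cubeFlip_or_apply_eq_of_adj {c : Fin d} {x y : Fin d → Bool}
    (h : (cubeGraph d).Adj x y) : y = cubeFlip c x ∨ y c = x c := by
  obtain ⟨i, hi, hj⟩ := h
  by_cases hic : i = c
  · subst hic
    left
    funext j
    by_cases hj' : j = i
    · subst hj'; simpa using Bool.eq_not.mpr (Ne.symm hi)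
    · simp [cubeFlip, Function.update_of_ne hj', hj j hj']
  · exact Or.inr (hj c (Ne.symm hic)).symm

end Flip

lemma SimpleGraph.Walk.end_mem_of_adj_mem {V : Type*} {G : SimpleGraph V} {S T : Set V}
    (hS : ∀ x ∈ S, ∀ y, G.Adj x y → y ∈ S ∨ y ∈ T) {u v : V} (p : G.Walk u v) (hu : u ∈ S)
    (hp : ∀ w ∈ p.support, w ∉ T) : v ∈ S := by
  by_contra hv
  obtain ⟨e, he, heS, heS'⟩ := p.exists_boundary_dart S hu hv
  exact (hS _ heS _ e.adj).elim heS' (hp _ (p.dart_snd_mem_support_of_mem_darts he))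

lemma cube3_card_filter_apply_eq (c : Fin 3) (b : Bool) :
    (Finset.univ.filter fun y : Fin 3 → Bool => y c = b).card = 4 := by
  revert c b
  decide

/-- `w₁ w₂ w₃ w₄` is the 4-cycle bounding the 2-face `x c = w₁ c` of the 3-cube. -/
def IsFaceCycle (c : Fin 3) (w₁ w₂ w₃ w₄ : Fin 3 → Bool) : Prop :=
  [w₁, w₂, w₃, w₄].Nodup ∧ (w₁ c = w₂ c ∧ w₂ c = w₃ c ∧ w₃ c = w₄ c) ∧
    ¬ (cubeGraph 3).Adj w₁ w₃ ∧ ¬ (cubeGraph 3).Adj w₂ w₄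

namespace IsFaceCycle

variable {c : Fin 3} {w₁ w₂ w₃ w₄ : Fin 3 → Bool}

lemma rotate (h : IsFaceCycle c w₁ w₂ w₃ w₄) : IsFaceCycle c w₂ w₃ w₄ w₁ := by
  obtain ⟨hnodup, ⟨h₁₂, h₂₃, h₃₄⟩, h₁₃, h₂₄⟩ := h
  refine ⟨?_, ⟨h₂₃, h₃₄, (h₁₂.trans (h₂₃.trans h₃₄)).symm⟩, h₂₄, fun h => h₁₃ h.symm⟩
  simpa using (List.nodup_rotate (n := 1)).mpr hnodup

lemma ne₁₃ (h : IsFaceCycle c w₁ w₂ w₃ w₄) : w₁ ≠ w₃ := by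
  have := h.1
  simp only [List.nodup_cons, List.mem_cons] at this
  tauto

lemma eq_of_apply_eq (h : IsFaceCycle c w₁ w₂ w₃ w₄) {y : Fin 3 → Bool} (hy : y c = w₁ c) :
    y = w₁ ∨ y = w₂ ∨ y = w₃ ∨ y = w₄ := by
  obtain ⟨hnodup, ⟨h₁₂, h₂₃, h₃₄⟩, -⟩ := h
  have hface : [w₁, w₂, w₃, w₄].toFinset = Finset.univ.filter fun y => y c = w₁ c := by
    refine Finset.eq_of_subset_of_card_le ?_ ?_
    · intro y
      simp only [List.mem_toFinset, List.mem_cons, List.not_mem_nil, or_false,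
        Finset.mem_filter, Finset.mem_univ, true_and]
      rintro (rfl | rfl | rfl | rfl) <;> simp [h₁₂, h₂₃, h₃₄]
    · rw [cube3_card_filter_apply_eq, List.toFinset_card_of_nodup hnodup]
      rfl
  have hy' : y ∈ [w₁, w₂, w₃, w₄].toFinset := hface ▸ Finset.mem_filter.mpr ⟨Finset.mem_univ y, hy⟩
  simpa using hy'

lemma eq_of_adj (h : IsFaceCycle c w₁ w₂ w₃ w₄) {y : Fin 3 → Bool}
    (hy : (cubeGraph 3).Adj w₁ y) : y = cubeFlip c w₁ ∨ y = w₂ ∨ y = w₄ := by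
  refine (cubeGraph.eq_cubeFlip_or_apply_eq_of_adj hy).imp_right fun hyc => ?_
  rcases h.eq_of_apply_eq hyc with rfl | rfl | rfl | rfl
  · exact absurd rfl hy.ne
  · exact Or.inl rfl
  · exact absurd hy h.2.2.1
  · exact Or.inr rfl

lemma eq_of_cubeFlip_adj (h : IsFaceCycle c w₁ w₂ w₃ w₄) {y : Fin 3 → Bool}
    (hy : (cubeGraph 3).Adj (cubeFlip c w₁) y) : y = w₁ ∨ y = cubeFlip c w₂ ∨ y = cubeFlip c w₄ := by
  rw [← cubeFlip_cubeFlip c y, cubeGraph_adj_cubeFlip_cubeFlip] at hy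
  simpa only [cubeFlip_cubeFlip, (cubeFlip_involutive c).eq_iff] using h.eq_of_adj hy

lemma cubeFlip_mem_support (h : IsFaceCycle c w₁ w₂ w₃ w₄) {q : (cubeGraph 3).Walk w₁ w₃}
    (h₂ : w₂ ∉ q.support) (h₄ : w₄ ∉ q.support) :
    cubeFlip c w₁ ∈ q.support ∧ cubeFlip c w₃ ∈ q.support := by
  have hq : ¬ q.Nil := Walk.not_nil_of_ne h.ne₁₃
  constructor
  · have hmem := q.getVert_mem_support 1
    obtain h' | h' | h' := h.eq_of_adj (q.adj_snd hq)
    exacts [h' ▸ hmem, absurd (h' ▸ hmem) h₂, absurd (h' ▸ hmem) h₄]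
  · have hmem := q.getVert_mem_support (q.length - 1)
    obtain h' | h' | h' := h.rotate.rotate.eq_of_adj (q.adj_penultimate hq).symm
    exacts [h' ▸ hmem, absurd (h' ▸ hmem) h₄, absurd (h' ▸ hmem) h₂]

lemma exists_mem_support (h : IsFaceCycle c w₁ w₂ w₃ w₄) (p : (cubeGraph 3).Walk w₁ w₃) :
    ∃ v ∈ p.support, v = w₂ ∨ v = w₄ ∨ v = cubeFlip c w₂ ∨ v = cubeFlip c w₄ := by
  by_contra! hp
  have hS : ∀ x ∈ ({w₁, cubeFlip c w₁} : Set _), ∀ y, (cubeGraph 3).Adj x y →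
      y ∈ ({w₁, cubeFlip c w₁} : Set _) ∨ y ∈ ({w₂, w₄, cubeFlip c w₂, cubeFlip c w₄} : Set _) := by
    rintro x (rfl | rfl) y hy
    · rcases h.eq_of_adj hy with rfl | rfl | rfl <;> simp
    · rcases h.eq_of_cubeFlip_adj hy with rfl | rfl | rfl <;> simp
  have hw₃ := p.end_mem_of_adj_mem hS (by simp) fun w hw => by simpa using hp w hw
  rcases hw₃ with hw₃ | hw₃
  · exact h.ne₁₃ hw₃.symm
  · have h₁₃ : w₁ c = w₃ c := h.2.1.1.trans h.2.1.2.1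
    have hc := congrFun (Set.mem_singleton_iff.mp hw₃) c
    simp [← h₁₃] at hc

lemma exists_mem_support_mem_support (h : IsFaceCycle c w₁ w₂ w₃ w₄)
    (p : (cubeGraph 3).Walk w₁ w₃) (q : (cubeGraph 3).Walk w₂ w₄) :
    ∃ v ∈ p.support, v ∈ q.support := by
  by_contra! hpq
  obtain ⟨v, hvp, hv⟩ := h.exists_mem_support p
  obtain ⟨h₂, h₄⟩ :=
    h.rotate.cubeFlip_mem_support (hpq _ p.end_mem_support) (hpq _ p.start_mem_support)
  rcases hv with rfl | rfl | rfl | rfl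
  exacts [hpq _ hvp q.start_mem_support, hpq _ hvp q.end_mem_support, hpq _ hvp h₂, hpq _ hvp h₄]

end IsFaceCycle

lemma List.Nodup.injective_sumElim {α : Type*} {a b c d : α} (h : [a, b, c, d].Nodup) :
    Function.Injective (Sum.elim ![a, b] ![c, d]) := by
  simp only [List.nodup_cons, List.mem_cons, List.not_mem_nil] at h
  refine .sumElim ?_ ?_ ?_ <;> simp_all [Function.Injective, Fin.forall_fin_two, eq_comm]

/-- If four distinct vertices `s₁, s₂, t₁, t₂` of the 3-cube all lie in a
common 2-face (they agree in some coordinate `c`) and appear there in the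
cyclic order `s₁, s₂, t₁, t₂` (equivalently, `s₁` is not adjacent to `t₁` and
`s₂` is not adjacent to `t₂`), then there are no two vertex-disjoint paths
joining `s₁` to `t₁` and `s₂` to `t₂` respectively. In particular the 3-cube
graph is not 2-linked. -/
theorem cube3_not_linked (s₁ s₂ t₁ t₂ : Fin 3 → Bool)
    (hnodup : [s₁, s₂, t₁, t₂].Nodup)
    (c : Fin 3) (hface : s₁ c = s₂ c ∧ s₂ c = t₁ c ∧ t₁ c = t₂ c)
    (h₁ : ¬ (cubeGraph 3).Adj s₁ t₁) (h₂ : ¬ (cubeGraph 3).Adj s₂ t₂) :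
    (¬ ∃ (p : (cubeGraph 3).Walk s₁ t₁) (q : (cubeGraph 3).Walk s₂ t₂),
        p.IsPath ∧ q.IsPath ∧ ∀ v ∈ p.support, v ∉ q.support) ∧
      ¬ IsKLinked (cubeGraph 3) 2 := by
  have hF : IsFaceCycle c s₁ s₂ t₁ t₂ := ⟨hnodup, hface, h₁, h₂⟩
  refine ⟨fun ⟨p, q, _, _, hdisj⟩ => ?_, fun ⟨_, hlinked⟩ => ?_⟩
  · obtain ⟨v, hvp, hvq⟩ := hF.exists_mem_support_mem_support p q
    exact hdisj v hvp hvq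
  · obtain ⟨P, -, hP⟩ := hlinked ![s₁, s₂] ![t₁, t₂] hnodup.injective_sumElim
    obtain ⟨v, hv₀, hv₁⟩ := hF.exists_mem_support_mem_support (P 0) (P 1)
    exact hP 0 1 (by decide) v hv₀ hv₁
end

section
/- Let s_1, t_1, s_2, t_2, s_3, t_3 be six distinct vertices of the 3-cube graph Q_3, organised into the three pairs {s_1,t_1}, {s_2,t_2}, {s_3,t_3}. Then there exist two distinct indices i, j ∈ {1,2,3} such that it is NOT the case that the four vertices s_i, t_i, s_j, t_j all agree in some coordinate (i.e., lie in a common 2-face) with s_i nonadjacent to t_i and s_j nonadjacent to t_j. Equivalently, some two of the three pairs are not arranged in the cyclic order s_i, s_j, t_i, t_j in a 2-face of the cube. -/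
namespace cubeGraph

variable {d : ℕ}

lemma eq_or_adj_of_forall_ne_eq {x y : Fin d → Bool} {i : Fin d}
    (h : ∀ j, j ≠ i → x j = y j) : x = y ∨ (cubeGraph d).Adj x y := by
  by_cases hi : x i = y i
  · exact Or.inl <| funext fun j => if hj : j = i then hj ▸ hi else h j hj
  · exact Or.inr ⟨i, hi, h⟩

lemma card_le_of_injective_of_apply_eq {α : Type*} [Fintype α] {f : α → Fin d → Bool}
    (hf : Function.Injective f) {c : Fin d} {b : Bool} (hface : ∀ a, f a c = b) :
    Fintype.card α ≤ 2 ^ (d - 1) := by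
  have hrestrict : Function.Injective fun a => (Equiv.piSplitAt c _ (f a)).2 := by
    intro a a' h
    apply hf
    apply (Equiv.piSplitAt c _).injective
    exact Prod.ext ((hface a).trans (hface a').symm) h
  simpa using Fintype.card_le_of_injective _ hrestrict

lemma eq_of_apply_eq_of_not_adj {x y : Fin 3 → Bool} (hne : x ≠ y)
    (hnadj : ¬ (cubeGraph 3).Adj x y) {c c' : Fin 3} (hc : x c = y c) (hc' : x c' = y c') :
    c = c' := by
  by_contra hcc
  obtain ⟨i, hi⟩ : ∃ i : Fin 3, ∀ j, j ≠ i → j = c ∨ j = c' := by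
    clear hc hc'
    revert c c'
    decide
  have hoff : ∀ j, j ≠ i → x j = y j := fun j hj => by
    rcases hi j hj with rfl | rfl <;> assumption
  exact (eq_or_adj_of_forall_ne_eq hoff).elim hne hnadj

end cubeGraph

/-- Given three pairs `{s i, t i}` (`i : Fin 3`) of six distinct vertices of
the 3-cube, there are two distinct indices `i ≠ j` such that it is NOT the
case that `s i, t i, s j, t j` all agree in some coordinate (lie in a common
2-face) with `s i` nonadjacent to `t i` and `s j` nonadjacent to `t j`,
i.e. some two of the pairs are not arranged in the cyclic order
`s i, s j, t i, t j` in a 2-face of the cube. -/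
theorem cube3_two_pairs_not_crossing (s t : Fin 3 → (Fin 3 → Bool))
    (hinj : Function.Injective (Sum.elim s t)) :
    ∃ i j : Fin 3, i ≠ j ∧
      ¬ ((∃ c : Fin 3, s i c = t i c ∧ t i c = s j c ∧ s j c = t j c) ∧
          ¬ (cubeGraph 3).Adj (s i) (t i) ∧
          ¬ (cubeGraph 3).Adj (s j) (t j)) := by
  by_contra h
  push Not at h
  have hst : ∀ i, s i ≠ t i := fun i e =>
    Sum.inl_ne_inr (hinj (a₁ := .inl i) (a₂ := .inr i) e)
  obtain ⟨⟨c, h01a, h01b, h01c⟩, hn0, hn1⟩ := h 0 1 (by decide)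
  obtain ⟨⟨c', h02, -, -⟩, -, -⟩ := h 0 2 (by decide)
  obtain ⟨⟨c'', h12a, h12b, h12c⟩, -, -⟩ := h 1 2 (by decide)
  obtain rfl : c = c' := cubeGraph.eq_of_apply_eq_of_not_adj (hst 0) hn0 h01a h02
  obtain rfl : c = c'' := cubeGraph.eq_of_apply_eq_of_not_adj (hst 1) hn1 h01c h12a
  have hface : ∀ v, Sum.elim s t v c = s 0 c := by
    rintro (i | i) <;> fin_cases i <;> simp_all
  have := cubeGraph.card_le_of_injective_of_apply_eq hinj hface
  simp at this
end

section
/- Let d ≥ 2 and let F be a proper face of the d-cube: the set of vertices of Q_d whose coordinates in a fixed nonempty set S ⊆ {1,…,d} take fixed prescribed values. Then the induced subgraph of the d-cube graph Q_d on the vertex set V(Q_d) \ F is (d−1)-connected. (This is the graph-level consequence of the paper's lemma that the antistar of a proper face of the d-cube is a strongly connected (d−1)-complex.) -/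
/-!
Pick `i ∈ S`. The facet `{x | x i = !f i}` opposite to the face is a `(d-1)`-cube disjoint from
it, and a `k`-cube stays connected after deleting fewer than `k` vertices. Any other vertex `x`
of the antistar has `x i = f i` and some `j ∈ S` with `x j ≠ f j`. It reaches the facet through
its neighbour across coordinate `i`, or, if that neighbour is deleted, through one of the `d - 2`
vertex-disjoint detours `x → x + e_k → x + e_k + e_i` with `k ∉ {i, j}`; these keep the
coordinate `j` and so avoid the face, and at most `d - 3` further vertices are deleted. The same
argument, applied to the half of a cube containing at most half of the deleted vertices, proves
the statement about cubes by induction on the dimension.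
-/

open Finset

theorem Finset.exists_two_mul_card_filter_eq_le {α : Type*} (T : Finset α) (p : α → Bool) :
    ∃ c : Bool, 2 * #{x ∈ T | p x = c} ≤ #T := by
  have hsplit : #{x ∈ T | p x = true} + #{x ∈ T | p x = false} = #T := by
    simpa only [Bool.not_eq_true] using
      card_filter_add_card_filter_not (s := T) (fun x => p x = true)
  by_cases h : #{x ∈ T | p x = true} ≤ #{x ∈ T | p x = false}
  · exact ⟨true, by omega⟩
  · exact ⟨false, by omega⟩

namespace SimpleGraph

variable {V : Type*} {G : SimpleGraph V}

theorem connected_induce_of_forall_exists_walk {s c : Set V} (hc : (G.induce c).Connected) (hcs : c ⊆ s)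
    (h : ∀ x ∈ s \ c, ∃ y ∈ c, ∃ p : G.Walk x y, ∀ v ∈ p.support, v ∈ s) :
    (G.induce s).Connected := by
  obtain ⟨u, hu⟩ := hc.nonempty.some
  refine G.induce_connected_of_patches u (hcs hu) fun {x} hx => ?_
  by_cases hxc : x ∈ c
  · exact ⟨c, hcs, hu, hxc, hc.preconnected _ _⟩
  obtain ⟨y, hy, p, hp⟩ := h x ⟨hx, hxc⟩
  have hpc : (G.induce (c ∪ {v | v ∈ p.support})).Connected :=
    induce_union_connected hc.preconnected p.connected_induce_support.preconnected
      ⟨y, hy, p.end_mem_support⟩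
  exact ⟨_, Set.union_subset hcs hp, Or.inl hu, Or.inr p.start_mem_support, hpc.preconnected _ _⟩

theorem connected_induce_induce_iff {s : Set V} {t : Set s} :
    ((G.induce s).induce t).Connected ↔ (G.induce (Subtype.val '' t)).Connected :=
  Iso.connected_iff ⟨Equiv.Set.image Subtype.val t Subtype.val_injective, Iff.rfl⟩

end SimpleGraph

namespace Cube

variable {d : ℕ}

def toggle (i : Fin d) (x : Fin d → Bool) : Fin d → Bool :=
  Function.update x i (!x i)

@[simp] lemma toggle_apply_self (i : Fin d) (x : Fin d → Bool) : toggle i x i = !x i := by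
  simp [toggle]

lemma toggle_apply_of_ne {i j : Fin d} (h : j ≠ i) (x : Fin d → Bool) : toggle i x j = x j := by
  simp [toggle, h]

lemma adj_toggle (i : Fin d) (x : Fin d → Bool) : (cubeGraph d).Adj x (toggle i x) :=
  ⟨i, by simp, fun _ hj => (toggle_apply_of_ne hj x).symm⟩

/-- The detours `x → toggle j x → toggle i (toggle j x)`, `j ∈ J`, are vertex-disjoint and miss
`toggle i x`, so a set containing `toggle i x` needs more than `#J` vertices to block them all. -/
lemma exists_detour {x : Fin d → Bool} {i : Fin d} {J : Finset (Fin d)} (hiJ : i ∉ J)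
    {T : Finset (Fin d → Bool)} (hT : #T ≤ #J) (hxi : toggle i x ∈ T) :
    ∃ j ∈ J, toggle j x ∉ T ∧ toggle i (toggle j x) ∉ T := by
  by_contra! hblocked
  let b (j : Fin d) : Fin d → Bool :=
    if toggle j x ∈ T then toggle j x else toggle i (toggle j x)
  have hb_apply : ∀ k, ∀ j ∈ J, b k j = if j = k then !x j else x j := by
    intro k j hj
    have hji : j ≠ i := ne_of_mem_of_not_mem hj hiJ
    simp only [b]
    split_ifs with hk hjk hjk <;> simp_all [toggle_apply_of_ne]
  have hmaps : Set.MapsTo b J (T.erase (toggle i x)) := by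
    intro j hj
    refine mem_erase.mpr ⟨fun h => ?_, ?_⟩
    · have := congrFun h j
      rw [hb_apply j j hj, toggle_apply_of_ne (ne_of_mem_of_not_mem hj hiJ)] at this
      simp at this
    · simp only [b]
      split_ifs with h
      exacts [h, hblocked j hj h]
  have hinj : Set.InjOn b J := by
    intro j hj k hk hjk
    by_contra hne
    have := congrFun hjk j
    rw [hb_apply j j hj, hb_apply k j hj, if_neg hne] at this
    simp at this
  have := card_le_card_of_injOn b hmaps hinj
  rw [card_erase_of_mem hxi] at this
  have := card_pos.mpr ⟨_, hxi⟩
  omega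

lemma exists_walk_across_avoiding {s : Set (Fin d → Bool)} {T : Finset (Fin d → Bool)} {i : Fin d}
    {J : Finset (Fin d)} (hiJ : i ∉ J) (hT : #T ≤ #J) {x : Fin d → Bool} (hxs : x ∈ s) (hxT : x ∉ T)
    (hxi : toggle i x ∈ s) (hJ : ∀ j ∈ J, toggle j x ∈ s ∧ toggle i (toggle j x) ∈ s) :
    ∃ y, y i = !x i ∧ ∃ p : (cubeGraph d).Walk x y, ∀ v ∈ p.support, v ∈ s \ ↑T := by
  by_cases hxiT : toggle i x ∈ T
  · obtain ⟨j, hj, hjT, hijT⟩ := exists_detour hiJ hT hxiT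
    have hji : i ≠ j := by rintro rfl; exact hiJ hj
    refine ⟨_, by simp [toggle_apply_of_ne hji],
      .cons (adj_toggle j x) (.cons (adj_toggle i _) .nil), ?_⟩
    simp [hxs, hxT, hjT, hijT, (hJ j hj).1, (hJ j hj).2]
  · exact ⟨_, toggle_apply_self i x, .cons (adj_toggle i x) .nil, by simp [hxs, hxT, hxi, hxiT]⟩

def subcube (A : Finset (Fin d)) (g : Fin d → Bool) : Set (Fin d → Bool) :=
  {x | ∀ i ∉ A, x i = g i}

lemma toggle_mem_subcube {A : Finset (Fin d)} {g x : Fin d → Bool} {i : Fin d} (hi : i ∈ A)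
    (hx : x ∈ subcube A g) : toggle i x ∈ subcube A g := by
  intro j hj
  rw [toggle_apply_of_ne (ne_of_mem_of_not_mem hi hj).symm]
  exact hx j hj

lemma subcube_update_subset_insert (A : Finset (Fin d)) (g : Fin d → Bool) (i : Fin d) (c : Bool) :
    subcube A (Function.update g i c) ⊆ subcube (insert i A) g := by
  intro x hx j hj
  rw [mem_insert, not_or] at hj
  simpa [hj.1] using hx j hj.2

lemma mem_subcube_update_of_mem_insert {A : Finset (Fin d)} {g x : Fin d → Bool} {i : Fin d}
    (hx : x ∈ subcube (insert i A) g) : x ∈ subcube A (Function.update g i (x i)) := by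
  intro j hj
  by_cases hji : j = i
  · simp [hji]
  · simpa [hji] using hx j (by simp [hji, hj])

lemma subcube_empty (g : Fin d → Bool) : subcube ∅ g = {g} := by
  ext x
  simp [subcube, funext_iff]

lemma mem_subcube_compl_singleton {i : Fin d} {g x : Fin d → Bool} :
    x ∈ subcube {i}ᶜ g ↔ x i = g i := by
  simp [subcube]

def subcubeEquiv (A : Finset (Fin d)) (g : Fin d → Bool) : subcube A g ≃ (A → Bool) where
  toFun x i := x.1 i
  invFun h := ⟨fun i => if hi : i ∈ A then h ⟨i, hi⟩ else g i, fun i hi => by simp [hi]⟩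
  left_inv := by
    rintro ⟨x, hx⟩
    ext i
    by_cases hi : i ∈ A
    · simp [hi]
    · simp [hi, hx i hi]
  right_inv h := by
    funext i
    simp

lemma card_subcube (A : Finset (Fin d)) (g : Fin d → Bool) : Nat.card (subcube A g) = 2 ^ #A := by
  simp [Nat.card_congr (subcubeEquiv A g)]

theorem connected_induce_subcube_diff (A : Finset (Fin d)) (g : Fin d → Bool)
    (T : Finset (Fin d → Bool)) (hT : #T < #A) :
    ((cubeGraph d).induce (subcube A g \ ↑T)).Connected := by
  induction A using Finset.induction_on generalizing g T with
  | empty => simp at hT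
  | insert i A hiA ih =>
    rw [card_insert_of_notMem hiA] at hT
    obtain ⟨c, hc⟩ := T.exists_two_mul_card_filter_eq_le (· i)
    have hcore : ((cubeGraph d).induce (subcube A (Function.update g i c) \ ↑T)).Connected := by
      rcases A.eq_empty_or_nonempty with rfl | hA
      · obtain rfl : T = ∅ := by simpa using hT
        rw [subcube_empty, coe_empty, Set.sdiff_empty]
        exact ⟨.of_subsingleton⟩
      · have hTc : subcube A (Function.update g i c) \ ↑T
            = subcube A (Function.update g i c) \ ↑{x ∈ T | x i = c} := by
          ext x
          simp only [Set.mem_sdiff, coe_filter, Set.mem_ofPred_eq, and_congr_right_iff]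
          intro hx
          simp [show x i = c by simpa using hx i hiA]
        rw [hTc]
        exact ih _ _ (by have := hA.card_pos; omega)
    refine SimpleGraph.connected_induce_of_forall_exists_walk hcore
      (Set.sdiff_subset_sdiff_left (subcube_update_subset_insert A g i c)) ?_
    rintro x ⟨hx, hxcore⟩
    have hxi : x i = !c := by
      by_contra hxi
      rw [Bool.eq_not, not_not] at hxi
      exact hxcore ⟨hxi ▸ mem_subcube_update_of_mem_insert hx.1, hx.2⟩
    obtain ⟨y, hyi, p, hp⟩ := exists_walk_across_avoiding hiA (by omega) hx.1 hx.2
      (toggle_mem_subcube (mem_insert_self i A) hx.1)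
      fun j hj => ⟨toggle_mem_subcube (mem_insert_of_mem hj) hx.1,
        toggle_mem_subcube (mem_insert_self i A) (toggle_mem_subcube (mem_insert_of_mem hj) hx.1)⟩
    have hy := hp y p.end_mem_support
    refine ⟨y, ⟨?_, hy.2⟩, p, hp⟩
    simpa [hyi, hxi] using mem_subcube_update_of_mem_insert hy.1

def face (S : Finset (Fin d)) (f : Fin d → Bool) : Set (Fin d → Bool) :=
  {x | ∀ i ∈ S, x i = f i}

lemma mem_compl_face {S : Finset (Fin d)} {f x : Fin d → Bool} :
    x ∈ (face S f)ᶜ ↔ ∃ j ∈ S, x j ≠ f j := by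
  simp [face]

lemma subcube_subset_compl_face {S : Finset (Fin d)} {i : Fin d} (hi : i ∈ S) (f : Fin d → Bool) :
    subcube {i}ᶜ (Function.update f i (!f i)) ⊆ (face S f)ᶜ := by
  intro x hx
  rw [mem_subcube_compl_singleton] at hx
  exact mem_compl_face.mpr ⟨i, hi, by simp [hx]⟩

lemma two_pow_le_card_compl_face {S : Finset (Fin d)} (hS : S.Nonempty) (f : Fin d → Bool) :
    2 ^ (d - 1) ≤ Nat.card ↥(face S f)ᶜ := by
  obtain ⟨i, hi⟩ := hS
  calc 2 ^ (d - 1) = Nat.card (subcube {i}ᶜ (Function.update f i (!f i))) := by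
        rw [card_subcube, card_compl, card_singleton, Fintype.card_fin]
    _ ≤ _ := Nat.card_mono (Set.toFinite _) (subcube_subset_compl_face hi f)

theorem connected_induce_compl_face_diff {S : Finset (Fin d)} (hS : S.Nonempty) (f : Fin d → Bool)
    (T : Finset (Fin d → Bool)) (hT : #T + 2 ≤ d) :
    ((cubeGraph d).induce ((face S f)ᶜ \ ↑T)).Connected := by
  obtain ⟨i, hi⟩ := hS
  have hcore := connected_induce_subcube_diff {i}ᶜ (Function.update f i (!f i)) T
    (by simp [card_compl]; omega)
  refine SimpleGraph.connected_induce_of_forall_exists_walk hcore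
    (Set.sdiff_subset_sdiff_left (subcube_subset_compl_face hi f)) ?_
  rintro x ⟨hx, hxcore⟩
  have hxi : x i = f i := by
    by_contra hxi
    exact hxcore ⟨mem_subcube_compl_singleton.mpr (by simpa using Bool.eq_not_of_ne hxi), hx.2⟩
  obtain ⟨j, hjS, hxj⟩ := mem_compl_face.mp hx.1
  have hji : j ≠ i := by rintro rfl; exact hxj hxi
  obtain ⟨y, hyi, p, hp⟩ := exists_walk_across_avoiding (i := i) (J := {i, j}ᶜ) (by simp)
    (by rw [card_compl, card_pair hji.symm, Fintype.card_fin]; omega) hx.1 hx.2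
    (mem_compl_face.mpr ⟨i, hi, by simp [hxi]⟩)
    fun k hk => by
      simp only [compl_insert, mem_erase, mem_compl, mem_singleton] at hk
      exact ⟨mem_compl_face.mpr ⟨j, hjS, by rwa [toggle_apply_of_ne (Ne.symm hk.2)]⟩,
        mem_compl_face.mpr ⟨i, hi, by simp [toggle_apply_of_ne hk.1.symm, hxi]⟩⟩
  exact ⟨y, ⟨mem_subcube_compl_singleton.mpr (by simp [hyi, hxi]),
    (hp y p.end_mem_support).2⟩, p, hp⟩

end Cube

open Cube in
theorem cube_antistar_connected_general (d : ℕ)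
    (S : Finset (Fin d)) (hS : S.Nonempty) (f : Fin d → Bool) :
    IsNConnected
      ((cubeGraph d).induce ({x : Fin d → Bool | ∀ i ∈ S, x i = f i}ᶜ))
      (d - 1) := by
  refine ⟨(Nat.lt_two_pow_self).trans_le (two_pow_le_card_compl_face hS f), fun T hT => ?_⟩
  rw [SimpleGraph.connected_induce_induce_iff, Set.image_val_compl, ← coe_image]
  exact connected_induce_compl_face_diff hS f _
    (by rw [card_image_of_injective _ Subtype.val_injective]; omega)

/-- Let `F` be a proper face of the `d`-cube (`d ≥ 2`): the set of vertices
whose coordinates in a fixed nonempty set `S` of coordinates take prescribed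
values given by `f`. Then the subgraph of the `d`-cube graph induced on the
complement of `F` is `(d-1)`-connected. -/
theorem cube_antistar_connected (d : ℕ) (hd : 2 ≤ d)
    (S : Finset (Fin d)) (hS : S.Nonempty) (f : Fin d → Bool) :
    IsNConnected
      ((cubeGraph d).induce ({x : Fin d → Bool | ∀ i ∈ S, x i = f i}ᶜ))
      (d - 1) :=
  cube_antistar_connected_general d S hS f
end
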